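/- arXiv:2201.12350 — 2 statements merged into one kernel-verified Lean document; each statement's English description precedes it below -/
import Mathlib

section
/- Suppose 1 ≤ p, q, r < ∞ satisfy 1/r = 1/p + 1/q. If A ∈ L_{p,∞} and B ∈ (L_{q,∞})_0, then the product AB belongs to (L_{r,∞})_0. -/
/-!
Common definitions modelling the setting of the paper
"Endpoint weak Schatten class estimates and trace formula for commutators of
Riesz transforms with multipliers on Heisenberg groups".
-/

open MeasureTheory Filter Complex ContinuousLinearMap
open scoped ENNReal NNReal Topology ComplexConjugate

noncomputable section

namespace HeisenbergPaper

/-- The underlying space of the Heisenberg group `ℍⁿ = ℂⁿ × ℝ`,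
with its (Haar = Lebesgue) measure coming from the product measure-space structure. -/
abbrev Heisenberg (n : ℕ) : Type := (Fin n → ℂ) × ℝ

/-- The Heisenberg group multiplication
`[z,t]·[z',t'] = [z + z', t + t' + Im ∑ⱼ zⱼ conj z'ⱼ]`. -/
def hmul {n : ℕ} (a b : Heisenberg n) : Heisenberg n :=
  (a.1 + b.1, a.2 + b.2 + ∑ j, (a.1 j * (starRingEnd ℂ) (b.1 j)).im)

/-- The Heisenberg group inverse. -/
def hinv {n : ℕ} (a : Heisenberg n) : Heisenberg n := (-a.1, -a.2)

/-- The anisotropic dilations `δ_r[z,t] = [rz, r²t]`. -/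
def hdil {n : ℕ} (r : ℝ) (a : Heisenberg n) : Heisenberg n := (r • a.1, r ^ 2 * a.2)

/-- `L²(ℍⁿ)`. -/
abbrev L2H (n : ℕ) := Lp ℂ 2 (volume : Measure (Heisenberg n))

/-- `L²(ℝⁿ)`. -/
abbrev L2R (n : ℕ) := Lp ℂ 2 (volume : Measure (Fin n → ℝ))

/-- Bounded operators on `L²(ℝⁿ)`. -/
abbrev OpR (n : ℕ) := L2R n →L[ℂ] L2R n

/-- The left-invariant horizontal vector fields `X_ℓ`, `1 ≤ ℓ ≤ 2n`, on `ℍⁿ`: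
for `ℓ ≤ n`, `X_ℓ = ∂/∂x_ℓ - y_ℓ ∂/∂t`, and `X_{n+ℓ} = Y_ℓ = ∂/∂y_ℓ + x_ℓ ∂/∂t`. -/
def Xfield {n : ℕ} (ℓ : Fin (2 * n)) (f : Heisenberg n → ℂ) (p : Heisenberg n) : ℂ :=
  if h : (ℓ : ℕ) < n then
    fderiv ℝ f p (Pi.single ⟨ℓ, h⟩ 1, 0) - ((p.1 ⟨ℓ, h⟩).im : ℂ) * fderiv ℝ f p (0, 1)
  else
    fderiv ℝ f p (Pi.single ⟨(ℓ : ℕ) - n, by have := ℓ.isLt; omega⟩ Complex.I, 0)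
      + ((p.1 ⟨(ℓ : ℕ) - n, by have := ℓ.isLt; omega⟩).re : ℂ) * fderiv ℝ f p (0, 1)

/-- The sub-Laplacian `Δ_ℍ = ∑_{ℓ=1}^{2n} X_ℓ²` acting on functions. -/
def subLaplacian {n : ℕ} (f : Heisenberg n → ℂ) : Heisenberg n → ℂ :=
  fun p => ∑ ℓ : Fin (2 * n), Xfield ℓ (Xfield ℓ f) p

/-- Test functions on `ℍⁿ`: smooth and compactly supported. -/
def IsTestFun {n : ℕ} (f : Heisenberg n → ℂ) : Prop :=
  ContDiff ℝ (⊤ : ℕ∞) f ∧ HasCompactSupport f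

/-- `g = X_ℓ f` in the sense of distributions. -/
def HasWeakX {n : ℕ} (ℓ : Fin (2 * n)) (f g : Heisenberg n → ℂ) : Prop :=
  ∀ φ : Heisenberg n → ℂ, IsTestFun φ →
    ∫ p, f p * Xfield ℓ φ p = -∫ p, g p * φ p

/-- `f` lies in the homogeneous Sobolev space `Ẇ^{1,p}(ℍⁿ)`, with (distributional)
horizontal gradient `g = (X₁ f, …, X_{2n} f)`. -/
def MemHomogeneousSobolev {n : ℕ} (p : ℝ≥0∞) (f : Heisenberg n → ℂ)
    (g : Fin (2 * n) → Heisenberg n → ℂ) : Prop :=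
  ∀ ℓ, MemLp (g ℓ) p volume ∧ HasWeakX ℓ f (g ℓ)

/-- The seminorm `‖f‖_{Ẇ^{1,p}} = ∑_ℓ ‖X_ℓ f‖_{L_p}` of the horizontal gradient `g`. -/
def sobolevSeminorm {n : ℕ} (p : ℝ≥0∞) (g : Fin (2 * n) → Heisenberg n → ℂ) : ℝ≥0∞ :=
  ∑ ℓ, eLpNorm (g ℓ) p volume

/-- The `k`-th singular value (approximation number) of a bounded operator:
`μ(k; A) = inf {‖A - F‖ : rank F ≤ k}`. -/
def sval {E : Type*} [NormedAddCommGroup E] [NormedSpace ℂ E] (A : E →L[ℂ] E) (k : ℕ) : ℝ :=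
  sInf {r : ℝ | ∃ F : E →L[ℂ] E,
    Module.rank ℂ (LinearMap.range (F : E →ₗ[ℂ] E)) ≤ (k : Cardinal) ∧ ‖A - F‖ = r}

/-- Membership in the weak Schatten class `𝓛_{p,∞}`. -/
def MemWeakSchatten {E : Type*} [NormedAddCommGroup E] [NormedSpace ℂ E] (p : ℝ)
    (A : E →L[ℂ] E) : Prop :=
  IsCompactOperator (⇑A) ∧ ∃ C : ℝ, ∀ k : ℕ, ((k : ℝ) + 1) ^ (1 / p) * sval A k ≤ C

/-- The quasi-norm of the weak Schatten class `𝓛_{p,∞}`: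
`‖A‖_{p,∞} = sup_k (k+1)^{1/p} μ(k;A)`. -/
def weakSchattenNorm {E : Type*} [NormedAddCommGroup E] [NormedSpace ℂ E] (p : ℝ)
    (A : E →L[ℂ] E) : ℝ≥0∞ :=
  ⨆ k : ℕ, ENNReal.ofReal (((k : ℝ) + 1) ^ (1 / p) * sval A k)

/-- Membership in the separable part `(𝓛_{p,∞})₀` of the weak Schatten class:
`A ∈ 𝓛_{p,∞}` with `k μ(k;A)^p → 0`. -/
def MemWeakSchatten0 {E : Type*} [NormedAddCommGroup E] [NormedSpace ℂ E] (p : ℝ)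
    (A : E →L[ℂ] E) : Prop :=
  MemWeakSchatten p A ∧ Tendsto (fun k : ℕ => (k : ℝ) * sval A k ^ p) atTop (𝓝 0)

/-- The `p`-th power of the Schatten `p`-norm, `∑_k μ(k;A)^p`. -/
def schattenNormPow {E : Type*} [NormedAddCommGroup E] [NormedSpace ℂ E] (p : ℝ)
    (A : E →L[ℂ] E) : ℝ≥0∞ :=
  ∑' k : ℕ, ENNReal.ofReal (sval A k ^ p)

/-- Membership in the Schatten class `𝓛_p`. -/
def MemSchatten {E : Type*} [NormedAddCommGroup E] [NormedSpace ℂ E] (p : ℝ)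
    (A : E →L[ℂ] E) : Prop :=
  IsCompactOperator (⇑A) ∧ schattenNormPow p A < ⊤

/-- A normalised continuous trace on the ideal `𝓛_{1,∞}`: a linear, tracial (`φ(AB) = φ(BA)`
for `A` bounded and `B ∈ 𝓛_{1,∞}`) functional, continuous for the `𝓛_{1,∞}` quasi-norm, taking
the value `1` on any positive operator with singular values `1/(k+1)`. -/
def IsNormalizedContinuousTrace {E : Type*} [NormedAddCommGroup E] [InnerProductSpace ℂ E]
    [CompleteSpace E] (φ : (E →L[ℂ] E) → ℂ) : Prop :=
  (∀ A B : E →L[ℂ] E, MemWeakSchatten 1 A → MemWeakSchatten 1 B → φ (A + B) = φ A + φ B)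
  ∧ (∀ (c : ℂ) (A : E →L[ℂ] E), MemWeakSchatten 1 A → φ (c • A) = c * φ A)
  ∧ (∀ A B : E →L[ℂ] E, MemWeakSchatten 1 B → φ (A * B) = φ (B * A))
  ∧ (∃ C : ℝ, ∀ A : E →L[ℂ] E, MemWeakSchatten 1 A →
      ‖φ A‖ ≤ C * (weakSchattenNorm 1 A).toReal)
  ∧ (∀ D : E →L[ℂ] E, D.IsPositive → (∀ k : ℕ, sval D k = 1 / ((k : ℝ) + 1)) → φ D = 1)

section specs
variable {n : ℕ}

/-- `M` is the operator of pointwise multiplication by `f` on `L²(ℍⁿ)`. -/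
def IsMulOp (f : Heisenberg n → ℂ) (M : L2H n →L[ℂ] L2H n) : Prop :=
  ∀ u : L2H n, (M u : Heisenberg n → ℂ) =ᵐ[volume] fun x => f x * (u : Heisenberg n → ℂ) x

/-- `P` is the heat semigroup `P t = e^{tΔ_ℍ}` generated by the sub-Laplacian: a strongly
continuous self-adjoint contraction semigroup whose generator agrees with `Δ_ℍ` on test
functions. -/
def IsHeatSemigroup (P : ℝ → (L2H n →L[ℂ] L2H n)) : Prop :=
  P 0 = 1
  ∧ (∀ s t : ℝ, 0 ≤ s → 0 ≤ t → P (s + t) = P s * P t)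
  ∧ (∀ t : ℝ, 0 ≤ t → ‖P t‖ ≤ 1)
  ∧ (∀ u : L2H n, ContinuousOn (fun t => P t u) (Set.Ici 0))
  ∧ (∀ t : ℝ, 0 ≤ t → ∀ u v : L2H n,
      (inner ℂ (P t u) v : ℂ) = (inner ℂ u (P t v) : ℂ))
  ∧ (∀ (φ : Heisenberg n → ℂ) (hφ : MemLp φ 2 volume)
      (hΔφ : MemLp (subLaplacian φ) 2 volume), IsTestFun φ →
      Tendsto (fun t : ℝ => (t : ℂ)⁻¹ • (P t (hφ.toLp φ) - hφ.toLp φ))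
        (𝓝[>] (0 : ℝ)) (𝓝 (hΔφ.toLp (subLaplacian φ))))

/-- `R = X_ℓ (-Δ_ℍ)^{-1/2}` expressed weakly through the heat semigroup `P` by subordination:
`⟪R u, v⟫ = -π^{-1/2} ∫₀^∞ t^{-1/2} ⟪P_t u, X_ℓ v⟫ dt` for test functions `u, v`. -/
def IsRieszWith (P : ℝ → (L2H n →L[ℂ] L2H n)) (ℓ : Fin (2 * n))
    (R : L2H n →L[ℂ] L2H n) : Prop :=
  ∀ (u v : Heisenberg n → ℂ) (hu : MemLp u 2 volume) (hv : MemLp v 2 volume)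
    (hXv : MemLp (Xfield ℓ v) 2 volume), IsTestFun u → IsTestFun v →
    (inner ℂ (R (hu.toLp u)) (hv.toLp v) : ℂ)
      = -(Real.pi : ℂ) ^ (-(1 / 2 : ℂ)) *
          ∫ t in Set.Ioi (0 : ℝ), (t : ℂ) ^ (-(1 / 2 : ℂ)) *
            (inner ℂ (P t (hu.toLp u)) (hXv.toLp (Xfield ℓ v)) : ℂ)

/-- `R` is the `ℓ`-th Riesz transform `R_ℓ = X_ℓ (-Δ_ℍ)^{-1/2}` on `ℍⁿ`. -/
def IsRieszTransform (ℓ : Fin (2 * n)) (R : L2H n →L[ℂ] L2H n) : Prop :=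
  ∃ P : ℝ → (L2H n →L[ℂ] L2H n), IsHeatSemigroup P ∧ IsRieszWith P ℓ R

/-- Weak subordination spec for `G = M_g (-Δ_ℍ)^{-1/2}`. -/
def IsMulHalfInv (P : ℝ → (L2H n →L[ℂ] L2H n)) (g : Heisenberg n → ℂ)
    (G : L2H n →L[ℂ] L2H n) : Prop :=
  ∀ (u v : Heisenberg n → ℂ) (hu : MemLp u 2 volume)
    (hgv : MemLp (fun x => (starRingEnd ℂ) (g x) * v x) 2 volume) (hv : MemLp v 2 volume),
    IsTestFun u → IsTestFun v →
    (inner ℂ (G (hu.toLp u)) (hv.toLp v) : ℂ)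
      = (Real.pi : ℂ) ^ (-(1 / 2 : ℂ)) *
          ∫ t in Set.Ioi (0 : ℝ), (t : ℂ) ^ (-(1 / 2 : ℂ)) *
            (inner ℂ (P t (hu.toLp u)) (hgv.toLp (fun x => (starRingEnd ℂ) (g x) * v x)) : ℂ)

/-- Weak subordination spec for the commutator `K = [M_f, (-Δ_ℍ)^{-1/2}]`. -/
def IsCommMulHalfInv (P : ℝ → (L2H n →L[ℂ] L2H n)) (f : Heisenberg n → ℂ)
    (K : L2H n →L[ℂ] L2H n) : Prop :=
  ∀ (u v : Heisenberg n → ℂ) (hu : MemLp u 2 volume) (hv : MemLp v 2 volume)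
    (hfu : MemLp (fun x => f x * u x) 2 volume)
    (hfv : MemLp (fun x => (starRingEnd ℂ) (f x) * v x) 2 volume),
    IsTestFun u → IsTestFun v →
    (inner ℂ (K (hu.toLp u)) (hv.toLp v) : ℂ)
      = (Real.pi : ℂ) ^ (-(1 / 2 : ℂ)) *
          ∫ t in Set.Ioi (0 : ℝ), (t : ℂ) ^ (-(1 / 2 : ℂ)) *
            ((inner ℂ (P t (hu.toLp u)) (hfv.toLp (fun x => (starRingEnd ℂ) (f x) * v x)) : ℂ)
              - (inner ℂ (P t (hfu.toLp (fun x => f x * u x))) (hv.toLp v) : ℂ))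

/-- `w = (-Δ_ℍ)^{1/2} u` via the subordination formula
`(-Δ)^{1/2} u = (2√π)⁻¹ ∫₀^∞ t^{-3/2} (u - P_t u) dt`. -/
def IsSqrtLaplacianImage (P : ℝ → (L2H n →L[ℂ] L2H n)) (u : Heisenberg n → ℂ)
    (hu : MemLp u 2 volume) (w : L2H n) : Prop :=
  w = ((2 * Real.sqrt Real.pi)⁻¹ : ℝ) •
      ∫ t in Set.Ioi (0 : ℝ), (t ^ (-(3 / 2 : ℝ)) : ℝ) • (hu.toLp u - P t (hu.toLp u))

/-- Characterisation of the double operator integral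
`a_k = T^{-Δ,-Δ}_ψ((-Δ)^{-1/4} X_k (-Δ)^{-1/4})` with symbol
`ψ(α₀,α₁) = 2α₀^{1/4}α₁^{1/4}/(α₀^{1/2}+α₁^{1/2})`, as the (unique, bounded) solution of the
Sylvester equation `(-Δ)^{1/2} a + a (-Δ)^{1/2} = 2 X_k`, in weak form on test functions. -/
def IsBalancedRiesz (P : ℝ → (L2H n →L[ℂ] L2H n)) (k : Fin (2 * n))
    (a : L2H n →L[ℂ] L2H n) : Prop :=
  ∀ (u v : Heisenberg n → ℂ) (hu : MemLp u 2 volume) (hv : MemLp v 2 volume)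
    (hXu : MemLp (Xfield k u) 2 volume), IsTestFun u → IsTestFun v →
    ∀ su sv : L2H n, IsSqrtLaplacianImage P u hu su → IsSqrtLaplacianImage P v hv sv →
      (inner ℂ (a (hu.toLp u)) sv : ℂ) + (inner ℂ (a su) (hv.toLp v) : ℂ)
        = 2 * (inner ℂ (hXu.toLp (Xfield k u)) (hv.toLp v) : ℂ)

/-- The `p`-th power of the `L_p(B(L²(ℝⁿ)) ⊗̄ ℂ², Tr ⊗ Σ)`-norm of a pair of operators
(`B(L²(ℝⁿ)) ⊗̄ ℂ²` being identified with pairs of bounded operators on `L²(ℝⁿ)`). -/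
def pairSchattenPow (n : ℕ) (p : ℝ) (x : OpR n × OpR n) : ℝ≥0∞ :=
  schattenNormPow p x.1 + schattenNormPow p x.2

/-- Membership in `L_p(B(L²(ℝⁿ)) ⊗̄ ℂ², Tr ⊗ Σ)`. -/
def MemSchattenPair (n : ℕ) (p : ℝ) (x : OpR n × OpR n) : Prop :=
  IsCompactOperator (⇑x.1) ∧ IsCompactOperator (⇑x.2) ∧ pairSchattenPow n p x < ⊤

/-- The rank-one operator `u ↦ ⟪y, u⟫ • x`. -/
def rankOne (x y : L2R n) : OpR n := (innerSL ℂ y).smulRight x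

/-- An orthonormal basis of `L²(ℝⁿ)` indexed by multi-indices (such as the Hermite basis). -/
def IsHilbertBasisFam (e : (Fin n → ℕ) → L2R n) : Prop :=
  Orthonormal ℂ e ∧ (Submodule.span ℂ (Set.range e)).topologicalClosure = ⊤

def addIdx (β : Fin n → ℕ) (k : Fin n) : Fin n → ℕ := Function.update β k (β k + 1)
def subIdx (β : Fin n → ℕ) (k : Fin n) : Fin n → ℕ := Function.update β k (β k - 1)
def degIdx (β : Fin n → ℕ) : ℕ := ∑ i, β i

/-- Spec: `Pk k = p_k H^{-1/2}` (momentum times the inverse square root of the harmonic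
oscillator), through its matrix elements in the Hermite-type basis `e`. -/
def IsMomentumHalf (e : (Fin n → ℕ) → L2R n) (Pk : Fin n → OpR n) : Prop :=
  ∀ (k : Fin n) (β : Fin n → ℕ),
    Pk k (e β) =
      (if β k = 0 then 0 else
        -Complex.I * (Real.sqrt ((β k : ℝ) / (4 * degIdx β + 2 * n)) : ℂ)) • e (subIdx β k)
      + (Complex.I * (Real.sqrt (((β k : ℝ) + 1) / (4 * degIdx β + 2 * n)) : ℂ)) • e (addIdx β k)

/-- Spec: `Qk k = q_k H^{-1/2}` (position times the inverse square root of the harmonic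
oscillator), through its matrix elements in the Hermite-type basis `e`. -/
def IsPositionHalf (e : (Fin n → ℕ) → L2R n) (Qk : Fin n → OpR n) : Prop :=
  ∀ (k : Fin n) (β : Fin n → ℕ),
    Qk k (e β) =
      (if β k = 0 then 0 else
        ((Real.sqrt ((β k : ℝ) / (4 * degIdx β + 2 * n)) : ℂ))) • e (subIdx β k)
      + ((Real.sqrt (((β k : ℝ) + 1) / (4 * degIdx β + 2 * n)) : ℂ)) • e (addIdx β k)

/-- `(Tr ⊗ Σ)(x)` computed through the orthonormal basis `e`. -/
def traceSigma (e : (Fin n → ℕ) → L2R n) (x : OpR n × OpR n) : ℂ :=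
  ∑' β : Fin n → ℕ, ((inner ℂ (e β) (x.1 (e β)) : ℂ) + (inner ℂ (e β) (x.2 (e β)) : ℂ))

/-- Spec: `πr` is the *-homomorphism
`π_red : B(L²(ℝⁿ)) ⊗̄ ℂ² → VN(ℍⁿ) ⊆ B(L²(ℍⁿ))`, normalised by
`π_red(i p_j H^{-1/2} ⊗ 𝟏) = R_j` and `π_red(i q_j H^{-1/2} ⊗ z) = R_{n+j}`, where
`𝟏 = (1,1)`, `z = (-1,1)` and `R` are the Riesz transforms. -/
def IsPiRed (Pk Qk : Fin n → OpR n) (R : Fin (2 * n) → (L2H n →L[ℂ] L2H n))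
    (πr : OpR n × OpR n → (L2H n →L[ℂ] L2H n)) : Prop :=
  (∀ x y : OpR n × OpR n, πr (x + y) = πr x + πr y)
  ∧ (∀ (c : ℂ) (x : OpR n × OpR n), πr (c • x) = c • πr x)
  ∧ (∀ x y : OpR n × OpR n, πr (x * y) = πr x * πr y)
  ∧ (∀ x : OpR n × OpR n, πr (star x) = star (πr x))
  ∧ (∀ x : OpR n × OpR n, ‖πr x‖ = ‖x‖)
  ∧ (∀ j : Fin n, πr (Complex.I • Pk j, Complex.I • Pk j)
      = R ⟨(j : ℕ), by have := j.isLt; omega⟩)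
  ∧ (∀ j : Fin n, πr (-(Complex.I • Qk j), Complex.I • Qk j)
      = R ⟨n + (j : ℕ), by have := j.isLt; omega⟩)

/-- Partial Fourier transform in the central variable `t`. -/
def partialFT (u : Heisenberg n → ℂ) (p : Heisenberg n) : ℂ :=
  ∫ t : ℝ, Complex.exp (-2 * Real.pi * Complex.I * t * p.2) * u (p.1, t)

/-- Spec: `W = χ_{(ε,∞)}(|T|) |T|^{-1/2}` where `T = ∂/∂t`, as a Fourier multiplier in the
central variable. -/
def IsTruncTInvSqrt (ε : ℝ) (W : L2H n →L[ℂ] L2H n) : Prop :=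
  ∀ (u v : Heisenberg n → ℂ) (hu : MemLp u 2 volume) (hv : MemLp v 2 volume),
    IsTestFun u → IsTestFun v →
    (inner ℂ (W (hu.toLp u)) (hv.toLp v) : ℂ)
      = ∫ p : Heisenberg n,
          ((if ε < 2 * Real.pi * |p.2| then ((2 * Real.pi * |p.2|) ^ (-(1 / 2 : ℝ)) : ℝ)
            else 0 : ℝ) : ℂ) *
            ((starRingEnd ℂ) (partialFT u p) * partialFT v p)

/-- Spec: `A = M_f π_red(x) |T|^{-1/2}`, defined as the operator-norm limit of
`M_f π_red(x) χ_{(ε,∞)}(|T|) |T|^{-1/2}` as `ε ↓ 0`. -/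
def IsAxf (πr : OpR n × OpR n → (L2H n →L[ℂ] L2H n)) (x : OpR n × OpR n)
    (Mf : L2H n →L[ℂ] L2H n) (A : L2H n →L[ℂ] L2H n) : Prop :=
  ∀ W : ℝ → (L2H n →L[ℂ] L2H n), (∀ ε : ℝ, 0 < ε → IsTruncTInvSqrt ε (W ε)) →
    Tendsto (fun ε : ℝ => ‖A - Mf * πr x * W ε‖) (𝓝[>] (0 : ℝ)) (𝓝 0)

/-- Spec: `ρ` is the family of right-translation operators `(ρ(g) u)(x) = u(xg)` on `L²(ℍⁿ)`. -/
def IsRightTranslations (ρ : Heisenberg n → (L2H n →L[ℂ] L2H n)) : Prop :=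
  ∀ (g : Heisenberg n) (u : L2H n),
    (ρ g u : Heisenberg n → ℂ) =ᵐ[volume] fun x => (u : Heisenberg n → ℂ) (hmul x g)

/-- Membership in the group von Neumann algebra `VN(ℍⁿ)`: commuting with all right
translations. -/
def InVN (ρ : Heisenberg n → (L2H n →L[ℂ] L2H n)) (B : L2H n →L[ℂ] L2H n) : Prop :=
  ∀ g : Heisenberg n, B * ρ g = ρ g * B

/-- Spec: `G` is the (left) group convolution operator with kernel `m`:
`(G u)(x) = ∫ m(x y⁻¹) u(y) dy`. -/
def IsConvOp (m : Heisenberg n → ℂ) (G : L2H n →L[ℂ] L2H n) : Prop :=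
  ∀ (u : Heisenberg n → ℂ) (hu : MemLp u 2 volume), IsTestFun u →
    (G (hu.toLp u) : Heisenberg n → ℂ) =ᵐ[volume]
      fun x => ∫ y : Heisenberg n, m (hmul x (hinv y)) * u y

/-- Spec: `τ` is the canonical semifinite normal trace on `VN(ℍⁿ)` (evaluated on positive
operators), normalised by the Plancherel identity `τ(λ(m)^* λ(m)) = ‖m‖₂²`. -/
def IsVNTrace (τ : (L2H n →L[ℂ] L2H n) → ℝ≥0∞) : Prop :=
  (∀ A : L2H n →L[ℂ] L2H n, τ (adjoint A * A) = τ (A * adjoint A))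
  ∧ (∀ A B : L2H n →L[ℂ] L2H n, A.IsPositive → B.IsPositive → τ (A + B) = τ A + τ B)
  ∧ (∀ (c : ℝ≥0) (A : L2H n →L[ℂ] L2H n), A.IsPositive → τ ((c : ℂ) • A) = (c : ℝ≥0∞) * τ A)
  ∧ (∀ (m : Heisenberg n → ℂ), MemLp m 2 volume → ∀ G : L2H n →L[ℂ] L2H n, IsConvOp m G →
      τ (adjoint G * G) = ∫⁻ x, (‖m x‖₊ : ℝ≥0∞) ^ (2 : ℕ))

/-- The generalized `t`-th singular value of `Y` relative to `(VN(ℍⁿ), τ)`: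
`μ_t(Y) = inf {‖Y e‖ : e a projection in VN(ℍⁿ), τ(1 - e) ≤ t}`. -/
def vnMu (ρ : Heisenberg n → (L2H n →L[ℂ] L2H n)) (τ : (L2H n →L[ℂ] L2H n) → ℝ≥0∞)
    (Y : L2H n →L[ℂ] L2H n) (t : ℝ) : ℝ :=
  sInf {r : ℝ | ∃ e : L2H n →L[ℂ] L2H n, InVN ρ e ∧ e * e = e ∧ IsSelfAdjoint e ∧
    τ (1 - e) ≤ ENNReal.ofReal t ∧ ‖Y * e‖ = r}

/-- The quasi-norm of `L_{p,∞}(VN(ℍⁿ), τ)`: `sup_{t>0} t^{1/p} μ_t(Y)`. -/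
def vnWeakLpNorm (ρ : Heisenberg n → (L2H n →L[ℂ] L2H n))
    (τ : (L2H n →L[ℂ] L2H n) → ℝ≥0∞) (p : ℝ) (Y : L2H n →L[ℂ] L2H n) : ℝ≥0∞ :=
  ⨆ t : {t : ℝ // 0 < t}, ENNReal.ofReal ((t : ℝ) ^ (1 / p) * vnMu ρ τ Y t)

/-- `τval` is the value of the canonical trace `τ` of `VN(ℍⁿ)` at the operator `B`, computed
through a concentrating mollifier family as `τ(B) = lim_{ε↓0} ⟪ρ_ε, B ρ_ε⟫` with
`ρ_ε = ε^{-(2n+2)} ρ ∘ δ_{1/ε}`, `ρ ≥ 0` a real test function of integral one. -/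
def IsVNTraceValueAt (B : L2H n →L[ℂ] L2H n) (τval : ℂ) : Prop :=
  ∃ (ρ : Heisenberg n → ℂ) (q : ℝ → L2H n),
    IsTestFun ρ ∧ (∀ x : Heisenberg n, 0 ≤ (ρ x).re ∧ (ρ x).im = 0) ∧
    (∫ x : Heisenberg n, ρ x) = 1 ∧
    (∀ ε : ℝ, 0 < ε →
      (q ε : Heisenberg n → ℂ) =ᵐ[volume]
        fun x => (((ε ^ (2 * n + 2))⁻¹ : ℝ) : ℂ) * ρ (hdil ε⁻¹ x)) ∧
    Tendsto (fun ε : ℝ => (inner ℂ (q ε) (B (q ε)) : ℂ)) (𝓝[>] (0 : ℝ)) (𝓝 τval)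

/-- Spec: `Φ` is the Borel functional calculus `g ↦ g(-Δ_ℍ)` of the sub-Laplacian, pinned by
its compatibility with the heat semigroup `P` and bounded pointwise convergence. -/
def IsBorelFunctionalCalculus (P : ℝ → (L2H n →L[ℂ] L2H n))
    (Φ : (ℝ → ℂ) → (L2H n →L[ℂ] L2H n)) : Prop :=
  (∀ g₁ g₂ : ℝ → ℂ, (∃ C, ∀ s, ‖g₁ s‖ ≤ C) → (∃ C, ∀ s, ‖g₂ s‖ ≤ C) →
      Φ (g₁ + g₂) = Φ g₁ + Φ g₂)
  ∧ (∀ (c : ℂ) (g : ℝ → ℂ), (∃ C, ∀ s, ‖g s‖ ≤ C) → Φ (fun s => c * g s) = c • Φ g)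
  ∧ (∀ g₁ g₂ : ℝ → ℂ, (∃ C, ∀ s, ‖g₁ s‖ ≤ C) → (∃ C, ∀ s, ‖g₂ s‖ ≤ C) →
      Φ (fun s => g₁ s * g₂ s) = Φ g₁ * Φ g₂)
  ∧ (∀ g : ℝ → ℂ, (∃ C, ∀ s, ‖g s‖ ≤ C) →
      Φ (fun s => (starRingEnd ℂ) (g s)) = adjoint (Φ g))
  ∧ (∀ (g : ℝ → ℂ) (C : ℝ), (∀ s, 0 ≤ s → ‖g s‖ ≤ C) → ‖Φ g‖ ≤ C)
  ∧ (∀ t : ℝ, 0 ≤ t → Φ (fun s => Complex.exp (-(t : ℂ) * s)) = P t)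
  ∧ (∀ (g : ℕ → ℝ → ℂ) (G : ℝ → ℂ) (C : ℝ), (∀ m s, ‖g m s‖ ≤ C) →
      (∀ s, 0 ≤ s → Tendsto (fun m => g m s) atTop (𝓝 (G s))) →
      ∀ u : L2H n, Tendsto (fun m => Φ (g m) u) atTop (𝓝 (Φ G u)))

/-- The Korányi gauge `d_K([z,t]) = (|z|⁴ + t²)^{1/4}`. -/
def koranyi (p : Heisenberg n) : ℝ :=
  ((∑ j, ‖p.1 j‖ ^ 2) ^ 2 + p.2 ^ 2) ^ ((1 : ℝ) / 4)

/-- The Korányi ball `B(0, r)` centred at the identity. -/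
def kball (n : ℕ) (r : ℝ) : Set (Heisenberg n) := {p | koranyi p < r}

/-- `L²(ℝⁿ × ℝ)`, the Hilbert space carrying `B(L²(ℝⁿ)) ⊗̄ L_∞(ℝ)`. -/
abbrev L2RR (n : ℕ) := Lp ℂ 2 (volume : Measure ((Fin n → ℝ) × ℝ))

/-- Spec: `M = 1 ⊗ M_g`, multiplication by `g` in the second variable on `L²(ℝⁿ × ℝ)`. -/
def IsSecondMul (g : ℝ → ℂ) (M : L2RR n →L[ℂ] L2RR n) : Prop :=
  ∀ u : L2RR n,
    (M u : (Fin n → ℝ) × ℝ → ℂ) =ᵐ[volume]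
      fun x => g x.2 * (u : (Fin n → ℝ) × ℝ → ℂ) x

/-- Membership in `B(L²(ℝⁿ)) ⊗̄ L_∞(ℝ)`, realised as the commutant of `1 ⊗ L_∞(ℝ)` inside
`B(L²(ℝⁿ × ℝ))`. -/
def InTensorAlgebra (A : L2RR n →L[ℂ] L2RR n) : Prop :=
  ∀ (g : ℝ → ℂ) (M : L2RR n →L[ℂ] L2RR n), (∃ C, ∀ s, ‖g s‖ ≤ C) → IsSecondMul g M →
    A * M = M * A

/-- The group exponential `exp(t X_j) = [t e_j, 0] ∈ ℍⁿ`. -/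
def expX (j : Fin n) (t : ℝ) : Heisenberg n := (Pi.single j (t : ℂ), 0)

/-- The group exponential `exp(t Y_j) = [i t e_j, 0] ∈ ℍⁿ`. -/
def expY (j : Fin n) (t : ℝ) : Heisenberg n := (Pi.single j ((t : ℂ) * Complex.I), 0)

/-- Spec: `U = exp(i t p_j ⊗ |s|^{1/2})` on `L²(ℝⁿ × ℝ)`:
`(Uξ)(x, s) = ξ(x + t |s|^{1/2} e_j, s)`. -/
def IsMomentumFlow (j : Fin n) (t : ℝ) (U : L2RR n →L[ℂ] L2RR n) : Prop :=
  ∀ u : L2RR n,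
    (U u : (Fin n → ℝ) × ℝ → ℂ) =ᵐ[volume]
      fun x => (u : (Fin n → ℝ) × ℝ → ℂ)
        (x.1 + (t * Real.sqrt |x.2|) • (Pi.single j (1 : ℝ) : Fin n → ℝ), x.2)

/-- Spec: `V = exp(i t q_j ⊗ sgn(s)|s|^{1/2})` on `L²(ℝⁿ × ℝ)`:
`(Vξ)(x, s) = e^{i t sgn(s) |s|^{1/2} x_j} ξ(x, s)`. -/
def IsPositionFlow (j : Fin n) (t : ℝ) (V : L2RR n →L[ℂ] L2RR n) : Prop :=
  ∀ u : L2RR n,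
    (V u : (Fin n → ℝ) × ℝ → ℂ) =ᵐ[volume]
      fun x => Complex.exp (Complex.I * t *
          ((Real.sign x.2 * Real.sqrt |x.2| * x.1 j : ℝ) : ℂ)) *
        (u : (Fin n → ℝ) × ℝ → ℂ) x

/-- Spec: `L = λ(g)` is left translation by the group element `g` on `L²(ℍⁿ)`:
`(λ(g) u)(h) = u(g⁻¹ h)`. -/
def IsLeftTranslation (g : Heisenberg n) (L : L2H n →L[ℂ] L2H n) : Prop :=
  ∀ u : L2H n,
    (L u : Heisenberg n → ℂ) =ᵐ[volume]
      fun h => (u : Heisenberg n → ℂ) (hmul (hinv g) h)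

/-- Spec: `T = y ⊗ M_g` is an elementary tensor operator on `L²(ℝⁿ × ℝ)`. -/
def IsElemTensor (y : OpR n) (g : ℝ → ℂ) (T : L2RR n →L[ℂ] L2RR n) : Prop :=
  ∀ (φ : (Fin n → ℝ) → ℂ) (ψ : ℝ → ℂ) (hφ : MemLp φ 2 volume)
    (hprod : MemLp (fun x : (Fin n → ℝ) × ℝ => φ x.1 * ψ x.2) 2 volume),
    (T (hprod.toLp (fun x : (Fin n → ℝ) × ℝ => φ x.1 * ψ x.2)) : (Fin n → ℝ) × ℝ → ℂ)
      =ᵐ[volume] fun x => g x.2 * ψ x.2 * (y (hφ.toLp φ) : (Fin n → ℝ) → ℂ) x.1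

/-- Trace on `B(L²(ℝⁿ))` through the orthonormal basis `e`. -/
def traceR (e : (Fin n → ℕ) → L2R n) (y : OpR n) : ℂ :=
  ∑' β : Fin n → ℕ, (inner ℂ (e β) (y (e β)) : ℂ)

end specs

section svalLemmas

variable {E : Type*} [NormedAddCommGroup E] [NormedSpace ℂ E]

private def svalSet (A : E →L[ℂ] E) (k : ℕ) : Set ℝ :=
  {r : ℝ | ∃ F : E →L[ℂ] E,
    Module.rank ℂ (LinearMap.range (F : E →ₗ[ℂ] E)) ≤ (k : Cardinal) ∧ ‖A - F‖ = r}

private lemma sval_eq_sInf (A : E →L[ℂ] E) (k : ℕ) : sval A k = sInf (svalSet A k) := rfl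

private lemma svalSet_nonempty (A : E →L[ℂ] E) (k : ℕ) : (svalSet A k).Nonempty := by
  refine ⟨‖A - 0‖, 0, ?_, rfl⟩
  simp

private lemma svalSet_bddBelow (A : E →L[ℂ] E) (k : ℕ) : BddBelow (svalSet A k) :=
  ⟨0, by rintro r ⟨F, -, rfl⟩; exact norm_nonneg _⟩

private lemma sval_nonneg (A : E →L[ℂ] E) (k : ℕ) : 0 ≤ sval A k := by
  rw [sval_eq_sInf]
  exact le_csInf (svalSet_nonempty A k) (by rintro r ⟨F, -, rfl⟩; exact norm_nonneg _)

private lemma sval_le_norm_sub (A F : E →L[ℂ] E) (k : ℕ)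
    (hF : Module.rank ℂ (LinearMap.range (F : E →ₗ[ℂ] E)) ≤ (k : Cardinal)) :
    sval A k ≤ ‖A - F‖ := by
  rw [sval_eq_sInf]
  exact csInf_le (svalSet_bddBelow A k) ⟨F, hF, rfl⟩

private lemma sval_antitone (A : E →L[ℂ] E) {j k : ℕ} (h : j ≤ k) : sval A k ≤ sval A j := by
  rw [sval_eq_sInf, sval_eq_sInf]
  refine csInf_le_csInf (svalSet_bddBelow A k) (svalSet_nonempty A j) ?_
  rintro r ⟨F, hF, rfl⟩
  exact ⟨F, hF.trans (by exact_mod_cast Nat.cast_le.mpr h), rfl⟩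

private lemma sval_exists_lt (A : E →L[ℂ] E) (k : ℕ) {a : ℝ} (h : sval A k < a) :
    ∃ F : E →L[ℂ] E,
      Module.rank ℂ (LinearMap.range (F : E →ₗ[ℂ] E)) ≤ (k : Cardinal) ∧ ‖A - F‖ < a := by
  rw [sval_eq_sInf] at h
  obtain ⟨r, ⟨F, hF, rfl⟩, hr⟩ := exists_lt_of_csInf_lt (svalSet_nonempty A k) h
  exact ⟨F, hF, hr⟩

private lemma sval_mul_le (A B : E →L[ℂ] E) (j k : ℕ) :
    sval (A * B) (j + k) ≤ sval A j * sval B k := by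
  have key : ∀ a b : ℝ, sval A j < a → sval B k < b → sval (A * B) (j + k) ≤ a * b := by
    intro a b ha hb
    obtain ⟨F, hF, hFa⟩ := sval_exists_lt A j ha
    obtain ⟨G, hG, hGb⟩ := sval_exists_lt B k hb
    set H : E →L[ℂ] E := F * B + (A - F) * G with hH
    have hrank : Module.rank ℂ (LinearMap.range (H : E →ₗ[ℂ] E)) ≤ ((j + k : ℕ) : Cardinal) := by
      have h1 : LinearMap.range (H : E →ₗ[ℂ] E) ≤
          LinearMap.range ((F * B : E →L[ℂ] E) : E →ₗ[ℂ] E) ⊔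
          LinearMap.range (((A - F) * G : E →L[ℂ] E) : E →ₗ[ℂ] E) := by
        rintro x ⟨y, rfl⟩
        have heq : (H : E →ₗ[ℂ] E) y = ((F * B : E →L[ℂ] E) : E →ₗ[ℂ] E) y
            + (((A - F) * G : E →L[ℂ] E) : E →ₗ[ℂ] E) y := by
          simp [hH]
        rw [heq]
        exact Submodule.add_mem_sup (LinearMap.mem_range_self _ y) (LinearMap.mem_range_self _ y)
      have h2 : Module.rank ℂ (LinearMap.range ((F * B : E →L[ℂ] E) : E →ₗ[ℂ] E))
          ≤ (j : Cardinal) := by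
        refine le_trans ?_ hF
        rw [ContinuousLinearMap.mul_def, ContinuousLinearMap.toLinearMap_comp]
        exact LinearMap.rank_comp_le_left _ _
      have h3 : Module.rank ℂ (LinearMap.range (((A - F) * G : E →L[ℂ] E) : E →ₗ[ℂ] E))
          ≤ (k : Cardinal) := by
        refine le_trans ?_ hG
        rw [ContinuousLinearMap.mul_def, ContinuousLinearMap.toLinearMap_comp]
        exact LinearMap.rank_comp_le_right _ _
      calc Module.rank ℂ (LinearMap.range (H : E →ₗ[ℂ] E))
          ≤ Module.rank ℂ ↥(LinearMap.range ((F * B : E →L[ℂ] E) : E →ₗ[ℂ] E) ⊔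
              LinearMap.range (((A - F) * G : E →L[ℂ] E) : E →ₗ[ℂ] E)) :=
            Submodule.rank_mono h1
        _ ≤ Module.rank ℂ (LinearMap.range ((F * B : E →L[ℂ] E) : E →ₗ[ℂ] E))
              + Module.rank ℂ (LinearMap.range (((A - F) * G : E →L[ℂ] E) : E →ₗ[ℂ] E)) :=
            Submodule.rank_add_le_rank_add_rank _ _
        _ ≤ (j : Cardinal) + (k : Cardinal) := add_le_add h2 h3
        _ = ((j + k : ℕ) : Cardinal) := by rw [Nat.cast_add]
    have hnorm : A * B - H = (A - F) * (B - G) := by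
      rw [hH]; noncomm_ring
    have h0a : 0 ≤ a := (sval_nonneg A j).trans_lt ha |>.le
    calc sval (A * B) (j + k) ≤ ‖A * B - H‖ := sval_le_norm_sub _ _ _ hrank
      _ = ‖(A - F) * (B - G)‖ := by rw [hnorm]
      _ ≤ ‖A - F‖ * ‖B - G‖ := norm_mul_le _ _
      _ ≤ a * b := mul_le_mul hFa.le hGb.le (norm_nonneg _) h0a
  have cont : Tendsto (fun ε : ℝ => (sval A j + ε) * (sval B k + ε)) (𝓝[>] 0)
      (𝓝 (sval A j * sval B k)) := by
    have hc : Tendsto (fun ε : ℝ => (sval A j + ε) * (sval B k + ε)) (𝓝 0)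
        (𝓝 ((sval A j + 0) * (sval B k + 0))) := by
      exact ((tendsto_const_nhds.add tendsto_id).mul (tendsto_const_nhds.add tendsto_id))
    simpa using hc.mono_left nhdsWithin_le_nhds
  refine ge_of_tendsto cont ?_
  filter_upwards [self_mem_nhdsWithin] with ε (hε : ε ∈ Set.Ioi 0)
  exact key _ _ (lt_add_of_pos_right _ hε) (lt_add_of_pos_right _ hε)

end svalLemmas

/-- Suppose `1 ≤ p, q, r < ∞` satisfy `1/r = 1/p + 1/q`. If
`A ∈ 𝓛_{p,∞}` and `B ∈ (𝓛_{q,∞})₀`, then `AB ∈ (𝓛_{r,∞})₀`. -/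
theorem statement6 {E : Type*} [NormedAddCommGroup E] [InnerProductSpace ℂ E]
    [CompleteSpace E] (p q r : ℝ) (hp : 1 ≤ p) (hq : 1 ≤ q) (hr : 1 ≤ r)
    (hpqr : 1 / r = 1 / p + 1 / q) (A B : E →L[ℂ] E)
    (hA : MemWeakSchatten p A) (hB : MemWeakSchatten0 q B) :
    MemWeakSchatten0 r (A * B) := by
  obtain ⟨hAc, CA, hCA⟩ := hA
  obtain ⟨⟨hBc, CB, hCB⟩, hBt⟩ := hB
  have hp0 : (0:ℝ) < p := lt_of_lt_of_le one_pos hp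
  have hq0 : (0:ℝ) < q := lt_of_lt_of_le one_pos hq
  have hr0 : (0:ℝ) < r := lt_of_lt_of_le one_pos hr
  have hCA0 : 0 ≤ CA := by
    refine le_trans ?_ (hCA 0)
    exact mul_nonneg (Real.rpow_nonneg (by norm_num) _) (sval_nonneg A 0)
  -- pointwise bound for A
  have hCA' : ∀ m : ℕ, sval A m ≤ CA * ((m : ℝ) + 1) ^ (-(1 / p)) := by
    intro m
    have hx : (0:ℝ) < (m:ℝ) + 1 := by positivity
    have h1 : (0:ℝ) < ((m:ℝ) + 1) ^ (1/p) := Real.rpow_pos_of_pos hx _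
    have h2 : sval A m ≤ CA / ((m:ℝ) + 1) ^ (1/p) :=
      (le_div_iff₀ h1).mpr (by rw [mul_comm]; exact hCA m)
    rwa [div_eq_mul_inv, ← Real.rpow_neg hx.le] at h2
  -- the sequence b
  set b : ℕ → ℝ := fun m => ((m : ℝ) + 1) ^ (1 / q) * sval B m with hb
  have hb0 : ∀ m, 0 ≤ b m := fun m =>
    mul_nonneg (Real.rpow_nonneg (by positivity) _) (sval_nonneg B m)
  have hbCB : ∀ m, b m ≤ CB := fun m => hCB m
  have hbq : ∀ m, b m ^ q = ((m:ℝ) + 1) * sval B m ^ q := by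
    intro m
    have hx : (0:ℝ) ≤ (m:ℝ) + 1 := by positivity
    rw [hb]
    rw [Real.mul_rpow (Real.rpow_nonneg hx _) (sval_nonneg B m),
      ← Real.rpow_mul hx, one_div_mul_cancel hq0.ne', Real.rpow_one]
  have hbt : Tendsto b atTop (𝓝 0) := by
    have h1 : Tendsto (fun m : ℕ => b m ^ q) atTop (𝓝 0) := by
      refine squeeze_zero' (g := fun m : ℕ => 2 * ((m:ℝ) * sval B m ^ q))
        (Filter.Eventually.of_forall fun m => Real.rpow_nonneg (hb0 m) q) ?_ ?_
      · filter_upwards [Filter.eventually_ge_atTop 1] with m hm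
        rw [hbq m]
        have h1m : (1:ℝ) ≤ (m:ℝ) := by exact_mod_cast hm
        have hs : 0 ≤ sval B m ^ q := Real.rpow_nonneg (sval_nonneg B m) q
        calc ((m:ℝ) + 1) * sval B m ^ q ≤ 2 * ((m:ℝ) * sval B m ^ q) := by nlinarith
          _ = (fun m : ℕ => 2 * ((m:ℝ) * sval B m ^ q)) m := rfl
      · simpa using hBt.const_mul (2:ℝ)
    have h2 := h1.rpow_const (p := 1/q) (Or.inr (by positivity))
    rw [Real.zero_rpow (by positivity : (1:ℝ)/q ≠ 0)] at h2
    have heq : ∀ m, (b m ^ q) ^ ((1:ℝ)/q) = b m := fun m => by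
      rw [← Real.rpow_mul (hb0 m), mul_one_div_cancel hq0.ne', Real.rpow_one]
    simpa only [heq] using h2
  -- the key bound
  have hkey : ∀ k : ℕ,
      sval (A * B) k ≤ CA * b (k/2) * (((k/2 : ℕ) : ℝ) + 1) ^ (-(1/r)) := by
    intro k
    have hx : (0:ℝ) < ((k/2 : ℕ):ℝ) + 1 := by positivity
    have h1 : sval (A * B) k ≤ sval A (k/2) * sval B (k/2) := by
      have h2 : k/2 + k/2 ≤ k := by omega
      exact (sval_antitone (A * B) h2).trans (sval_mul_le A B (k/2) (k/2))
    have hsB : b (k/2) * (((k/2 : ℕ):ℝ) + 1) ^ (-(1/q)) = sval B (k/2) := by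
      have hone : (((k/2 : ℕ):ℝ) + 1) ^ (1/q) * (((k/2 : ℕ):ℝ) + 1) ^ (-(1/q)) = 1 := by
        rw [← Real.rpow_add hx, add_neg_cancel, Real.rpow_zero]
      calc b (k/2) * (((k/2 : ℕ):ℝ) + 1) ^ (-(1/q))
          = sval B (k/2) * ((((k/2 : ℕ):ℝ) + 1) ^ (1/q) * (((k/2 : ℕ):ℝ) + 1) ^ (-(1/q))) := by
            rw [hb]; ring
        _ = sval B (k/2) := by rw [hone, mul_one]
    calc sval (A * B) k ≤ sval A (k/2) * sval B (k/2) := h1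
      _ ≤ (CA * (((k/2 : ℕ):ℝ) + 1) ^ (-(1/p))) * sval B (k/2) :=
          mul_le_mul_of_nonneg_right (hCA' (k/2)) (sval_nonneg B (k/2))
      _ = (CA * (((k/2 : ℕ):ℝ) + 1) ^ (-(1/p)))
            * (b (k/2) * (((k/2 : ℕ):ℝ) + 1) ^ (-(1/q))) := by rw [hsB]
      _ = CA * b (k/2)
            * ((((k/2 : ℕ):ℝ) + 1) ^ (-(1/p)) * (((k/2 : ℕ):ℝ) + 1) ^ (-(1/q))) := by ring
      _ = CA * b (k/2) * (((k/2 : ℕ):ℝ) + 1) ^ (-(1/r)) := by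
          rw [← Real.rpow_add hx, ← neg_add, ← hpqr]
  -- compactness
  have hcomp : IsCompactOperator ⇑(A * B) := by
    rw [ContinuousLinearMap.mul_def, ContinuousLinearMap.coe_comp']
    exact hAc.comp_clm B
  -- the weak Schatten bound
  have hbound : ∀ k : ℕ, ((k:ℝ) + 1) ^ (1/r) * sval (A * B) k ≤ (2:ℝ) ^ (1/r) * (CA * CB) := by
    intro k
    have hx : (0:ℝ) < ((k/2 : ℕ):ℝ) + 1 := by positivity
    have hle : ((k:ℝ) + 1) ≤ 2 * (((k/2 : ℕ):ℝ) + 1) := by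
      have h4 : k + 1 ≤ 2 * (k/2) + 2 := by omega
      calc ((k:ℝ) + 1) = ((k + 1 : ℕ) : ℝ) := by push_cast; ring
        _ ≤ ((2 * (k/2) + 2 : ℕ) : ℝ) := Nat.cast_le.mpr h4
        _ = 2 * (((k/2 : ℕ):ℝ) + 1) := by push_cast; ring
    have h1 : ((k:ℝ) + 1) ^ (1/r) ≤ (2 * (((k/2 : ℕ):ℝ) + 1)) ^ (1/r) :=
      Real.rpow_le_rpow (by positivity) hle (by positivity)
    have h2 : sval (A * B) k ≤ CA * CB * (((k/2 : ℕ):ℝ) + 1) ^ (-(1/r)) := by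
      refine (hkey k).trans ?_
      exact mul_le_mul_of_nonneg_right
        (mul_le_mul_of_nonneg_left (hbCB (k/2)) hCA0) (Real.rpow_nonneg hx.le _)
    have hCACB : 0 ≤ CA * CB := mul_nonneg hCA0 ((hb0 0).trans (hbCB 0))
    calc ((k:ℝ) + 1) ^ (1/r) * sval (A * B) k
        ≤ (2 * (((k/2 : ℕ):ℝ) + 1)) ^ (1/r)
            * (CA * CB * (((k/2 : ℕ):ℝ) + 1) ^ (-(1/r))) :=
          mul_le_mul h1 h2 (sval_nonneg _ _) (Real.rpow_nonneg (by positivity) _)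
      _ = (2:ℝ) ^ (1/r) * (CA * CB)
            * ((((k/2 : ℕ):ℝ) + 1) ^ (1/r) * (((k/2 : ℕ):ℝ) + 1) ^ (-(1/r))) := by
          rw [Real.mul_rpow (by norm_num) hx.le]; ring
      _ = (2:ℝ) ^ (1/r) * (CA * CB) := by
          rw [← Real.rpow_add hx, add_neg_cancel, Real.rpow_zero, mul_one]
  -- the tendsto part
  have ht : Tendsto (fun k : ℕ => (k:ℝ) * sval (A * B) k ^ r) atTop (𝓝 0) := by
    have hdiv : Tendsto (fun k : ℕ => k / 2) atTop atTop :=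
      tendsto_atTop_atTop_of_monotone (fun a b h => Nat.div_le_div_right h)
        (fun c => ⟨2 * c, by omega⟩)
    have hg : Tendsto (fun k : ℕ => 2 * (CA ^ r * b (k/2) ^ r)) atTop (𝓝 0) := by
      have h5 := (hbt.comp hdiv).rpow_const (p := r) (Or.inr hr0.le)
      rw [Real.zero_rpow hr0.ne'] at h5
      simpa using ((h5.const_mul (CA ^ r)).const_mul (2:ℝ))
    refine squeeze_zero' ?_ ?_ hg
    · exact Filter.Eventually.of_forall fun k =>
        mul_nonneg (Nat.cast_nonneg k) (Real.rpow_nonneg (sval_nonneg _ _) r)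
    · refine Filter.Eventually.of_forall fun k => ?_
      have hx : (0:ℝ) < ((k/2 : ℕ):ℝ) + 1 := by positivity
      have h2 : sval (A * B) k ^ r
          ≤ (CA * b (k/2) * (((k/2 : ℕ):ℝ) + 1) ^ (-(1/r))) ^ r :=
        Real.rpow_le_rpow (sval_nonneg _ _) (hkey k) hr0.le
      have h3 : (CA * b (k/2) * (((k/2 : ℕ):ℝ) + 1) ^ (-(1/r))) ^ r
          = CA ^ r * b (k/2) ^ r * (((k/2 : ℕ):ℝ) + 1)⁻¹ := by
        rw [Real.mul_rpow (mul_nonneg hCA0 (hb0 _)) (Real.rpow_nonneg hx.le _),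
          Real.mul_rpow hCA0 (hb0 _), ← Real.rpow_mul hx.le,
          show -(1/r) * r = (-1 : ℝ) by field_simp, Real.rpow_neg_one]
      have hk2x : (k:ℝ) ≤ 2 * (((k/2 : ℕ):ℝ) + 1) := by
        have h4 : k ≤ 2 * (k/2) + 2 := by omega
        calc (k:ℝ) ≤ ((2 * (k/2) + 2 : ℕ) : ℝ) := Nat.cast_le.mpr h4
          _ = 2 * (((k/2 : ℕ):ℝ) + 1) := by push_cast; ring
      calc (k:ℝ) * sval (A * B) k ^ r
          ≤ (2 * (((k/2 : ℕ):ℝ) + 1)) * (CA ^ r * b (k/2) ^ r * (((k/2 : ℕ):ℝ) + 1)⁻¹) :=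
            mul_le_mul hk2x (h2.trans_eq h3)
              (Real.rpow_nonneg (sval_nonneg _ _) r) (by positivity)
        _ = 2 * (CA ^ r * b (k/2) ^ r) * ((((k/2 : ℕ):ℝ) + 1) * (((k/2 : ℕ):ℝ) + 1)⁻¹) := by
            ring
        _ = 2 * (CA ^ r * b (k/2) ^ r) := by rw [mul_inv_cancel₀ hx.ne', mul_one]
  exact ⟨⟨hcomp, ⟨(2:ℝ) ^ (1/r) * (CA * CB), hbound⟩⟩, ht⟩

end HeisenbergPaper
end
end

section
/- For all ξ ∈ C² and all multi-indices α, β ∈ Z_+^n, the operator E_{α,β} ⊗ ξ belongs to the C*-subalgebra of B(L_2(R^n)) ⊗̄ C² generated by the 2n elements {p_k H^{−1/2} ⊗ 1, q_k H^{−1/2} ⊗ z : 1 ≤ k ≤ n}. -/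
/-!
Common definitions modelling the setting of the paper
"Endpoint weak Schatten class estimates and trace formula for commutators of
Riesz transforms with multipliers on Heisenberg groups".
-/

open MeasureTheory Filter Complex ContinuousLinearMap
open scoped ENNReal NNReal Topology ComplexConjugate

noncomputable section

namespace HeisenbergPaper

namespace Aux15

variable {n : ℕ} {e : (Fin n → ℕ) → L2R n}

lemma inner_e (he : IsHilbertBasisFam e) (γ β : Fin n → ℕ) :
    (inner ℂ (e γ) (e β) : ℂ) = if γ = β then 1 else 0 := by
  classical exact orthonormal_iff_ite.mp he.1 γ β

lemma dense_e (he : IsHilbertBasisFam e) :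
    Dense (↑(Submodule.span ℂ (Set.range e)) : Set (L2R n)) := by
  exact Submodule.dense_iff_topologicalClosure_eq_top.mpr he.2

/-- Extensionality for continuous linear maps agreeing on basis. -/
lemma clm_ext_e (he : IsHilbertBasisFam e) {F : Type*} [NormedAddCommGroup F]
    [NormedSpace ℂ F] {f g : L2R n →L[ℂ] F} (h : ∀ β, f (e β) = g (e β)) : f = g := by
  refine ContinuousLinearMap.ext_on (dense_e he) ?_
  rintro x ⟨β, rfl⟩
  exact h β

/-- Extensionality for vectors through inner products with basis. -/
lemma vec_ext_e (he : IsHilbertBasisFam e) {v w : L2R n}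
    (h : ∀ γ, (inner ℂ (e γ) v : ℂ) = inner ℂ (e γ) w) : v = w := by
  have hm : v - w ∈ (Submodule.span ℂ (Set.range e))ᗮ := by
    rw [Submodule.mem_orthogonal]
    intro u hu
    induction hu using Submodule.span_induction with
    | mem x hx => obtain ⟨γ, rfl⟩ := hx; rw [inner_sub_right, h γ, sub_self]
    | zero => exact inner_zero_left _
    | add x y _ _ hx hy => rw [inner_add_left, hx, hy, add_zero]
    | smul c x _ hx => rw [inner_smul_left, hx, mul_zero]
  rw [Submodule.topologicalClosure_eq_top_iff.mp he.2, Submodule.mem_bot] at hm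
  exact sub_eq_zero.mp hm

/-- Norm bound for diagonal operators. -/
lemma diag_norm_le (he : IsHilbertBasisFam e) (T : OpR n) (c : (Fin n → ℕ) → ℂ)
    (hT : ∀ β, T (e β) = c β • e β) {M : ℝ} (hM : 0 ≤ M)
    (hc : ∀ β, ‖c β‖ ≤ M) : ‖T‖ ≤ M := by
  classical
  set b : HilbertBasis (Fin n → ℕ) ℂ (L2R n) := HilbertBasis.mk he.1 (le_of_eq he.2.symm)
  have hb : ⇑b = e := HilbertBasis.coe_mk _ _
  refine T.opNorm_le_bound hM (fun u => ?_)
  have hrepr : ∀ i, b.repr (T u) i = c i * b.repr u i := by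
    intro i
    have key : (innerSL ℂ (e i)).comp T = (c i) • innerSL ℂ (e i) := by
      refine clm_ext_e he (fun β => ?_)
      simp only [ContinuousLinearMap.comp_apply, ContinuousLinearMap.smul_apply, innerSL_apply_apply,
        hT β, inner_smul_right, inner_e he]
      by_cases hib : i = β <;> simp [hib] <;> ring
    have := congrArg (fun f => f u) key
    simp only [ContinuousLinearMap.comp_apply, ContinuousLinearMap.smul_apply,
      innerSL_apply_apply] at this
    rw [HilbertBasis.repr_apply_apply, HilbertBasis.repr_apply_apply]
    change (inner ℂ (b i) (T u) : ℂ) = c i * inner ℂ (b i) u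
    rw [hb, this]; rfl
  have hnorm : ‖b.repr (T u)‖ ≤ M * ‖b.repr u‖ := by
    have h2 : (0:ℝ) < (2 : ℝ≥0∞).toReal := by norm_num
    have e1 := lp.norm_rpow_eq_tsum h2 (b.repr (T u))
    have e2 := lp.norm_rpow_eq_tsum h2 (b.repr u)
    have hsum1 : Summable fun i => ‖b.repr (T u) i‖ ^ (2 : ℝ≥0∞).toReal :=
      (lp.memℓp (b.repr (T u))).summable h2
    have hsum2 : Summable fun i => ‖b.repr u i‖ ^ (2 : ℝ≥0∞).toReal :=
      (lp.memℓp (b.repr u)).summable h2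
    have hle : ∀ i, ‖b.repr (T u) i‖ ^ (2 : ℝ≥0∞).toReal
        ≤ M ^ (2 : ℝ≥0∞).toReal * ‖b.repr u i‖ ^ (2 : ℝ≥0∞).toReal := by
      intro i
      rw [← Real.mul_rpow hM (norm_nonneg _)]
      refine Real.rpow_le_rpow (norm_nonneg _) ?_ (le_of_lt h2)
      rw [hrepr i, norm_mul]
      exact mul_le_mul_of_nonneg_right (hc i) (norm_nonneg _)
    have hts : ∑' i, ‖b.repr (T u) i‖ ^ (2 : ℝ≥0∞).toReal
        ≤ M ^ (2 : ℝ≥0∞).toReal * ∑' i, ‖b.repr u i‖ ^ (2 : ℝ≥0∞).toReal := by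
      rw [← tsum_mul_left]
      exact Summable.tsum_le_tsum hle hsum1 (hsum2.mul_left _)
    rw [← e1, ← e2, ← Real.mul_rpow hM (norm_nonneg _)] at hts
    have ht2 : (2 : ℝ≥0∞).toReal = (2 : ℝ) := by norm_num
    rw [ht2, Real.rpow_two, Real.rpow_two] at hts
    exact (pow_le_pow_iff_left₀ (norm_nonneg _) (mul_nonneg hM (norm_nonneg _))
      two_ne_zero).mp hts
  calc ‖T u‖ = ‖b.repr (T u)‖ := (b.repr.norm_map _).symm
    _ ≤ M * ‖b.repr u‖ := hnorm
    _ = M * ‖u‖ := by rw [b.repr.norm_map]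



lemma rankOne_apply (x y u : L2R n) : rankOne x y u = (inner ℂ y u : ℂ) • x := rfl

lemma adjoint_rankOne (x y : L2R n) :
    ContinuousLinearMap.adjoint (rankOne x y) = rankOne y x := by
  refine ((ContinuousLinearMap.eq_adjoint_iff (rankOne y x) (rankOne x y)).mpr
    (fun u v => ?_)).symm
  simp only [rankOne_apply, inner_smul_left, inner_smul_right, inner_conj_symm]
  ring

lemma rankOne_comp (x y : L2R n) (T : OpR n) :
    (rankOne x y).comp T = rankOne x (ContinuousLinearMap.adjoint T y) := by
  refine ContinuousLinearMap.ext fun u => ?_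
  simp only [ContinuousLinearMap.comp_apply, rankOne_apply,
    ContinuousLinearMap.adjoint_inner_left]

lemma comp_rankOne (x y : L2R n) (T : OpR n) :
    T.comp (rankOne x y) = rankOne (T x) y := by
  refine ContinuousLinearMap.ext fun u => ?_
  simp only [ContinuousLinearMap.comp_apply, rankOne_apply, ContinuousLinearMap.map_smul]

/-- coefficients -/
def den (n : ℕ) (β : Fin n → ℕ) : ℝ := 4 * degIdx β + 2 * n
def sb (β : Fin n → ℕ) (k : Fin n) : ℝ := Real.sqrt (((β k : ℝ) + 1) / den n β)
def sa (β : Fin n → ℕ) (k : Fin n) : ℝ := Real.sqrt ((β k : ℝ) / den n β)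

lemma den_pos (hn : 1 ≤ n) (β : Fin n → ℕ) : 0 < den n β := by
  have : (1:ℝ) ≤ (n:ℝ) := by exact_mod_cast hn
  have h0 : (0:ℝ) ≤ (degIdx β : ℝ) := Nat.cast_nonneg _
  unfold den; nlinarith

lemma sb_pos (hn : 1 ≤ n) (β : Fin n → ℕ) (k : Fin n) : 0 < sb β k :=
  Real.sqrt_pos.mpr (div_pos (by positivity) (den_pos hn β))

lemma sb_sq (hn : 1 ≤ n) (β : Fin n → ℕ) (k : Fin n) :
    sb β k * sb β k = ((β k : ℝ) + 1) / den n β :=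
  Real.mul_self_sqrt (le_of_lt (div_pos (by positivity) (den_pos hn β)))

lemma sa_sq (hn : 1 ≤ n) (β : Fin n → ℕ) (k : Fin n) :
    sa β k * sa β k = (β k : ℝ) / den n β :=
  Real.mul_self_sqrt (div_nonneg (Nat.cast_nonneg _) (le_of_lt (den_pos hn β)))

/-- The pair operator whose components are `∓Q+iP`. -/
def Cop (Pk Qk : Fin n → OpR n) (k : Fin n) : OpR n × OpR n :=
  ((-Qk k, Qk k) : OpR n × OpR n) + Complex.I • ((Pk k, Pk k) : OpR n × OpR n)

lemma Cop_fst (Pk Qk : Fin n → OpR n) (hPk : IsMomentumHalf e Pk)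
    (hQk : IsPositionHalf e Qk) (k : Fin n) (β : Fin n → ℕ) :
    (Cop Pk Qk k).1 (e β) = ((-2 * sb β k : ℝ) : ℂ) • e (addIdx β k) := by
  have h1 : (Cop Pk Qk k).1 = -Qk k + Complex.I • Pk k := rfl
  rw [h1]
  simp only [ContinuousLinearMap.add_apply, ContinuousLinearMap.neg_apply,
    ContinuousLinearMap.smul_apply, hPk k β, hQk k β]
  have hA : ∀ c : ℂ, Complex.I * (-Complex.I * c) = c := fun c => by
    rw [← mul_assoc]; simp
  have hB : ∀ c : ℂ, Complex.I * (Complex.I * c) = -c := fun c => by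
    rw [← mul_assoc, Complex.I_mul_I]; ring
  simp only [smul_add, smul_smul, mul_ite, mul_zero, hA, hB, sb, sa, den]
  push_cast
  module

lemma Cop_snd (Pk Qk : Fin n → OpR n) (hPk : IsMomentumHalf e Pk)
    (hQk : IsPositionHalf e Qk) (k : Fin n) (β : Fin n → ℕ) :
    (Cop Pk Qk k).2 (e β) = ((2 * sa β k : ℝ) : ℂ) • e (subIdx β k) := by
  have h1 : (Cop Pk Qk k).2 = Qk k + Complex.I • Pk k := rfl
  rw [h1]
  simp only [ContinuousLinearMap.add_apply, ContinuousLinearMap.smul_apply, hPk k β, hQk k β]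
  have hA : ∀ c : ℂ, Complex.I * (-Complex.I * c) = c := fun c => by
    rw [← mul_assoc]; simp
  have hB : ∀ c : ℂ, Complex.I * (Complex.I * c) = -c := fun c => by
    rw [← mul_assoc, Complex.I_mul_I]; ring
  by_cases h0 : β k = 0
  · simp only [if_pos h0, sa, h0, Nat.cast_zero, zero_div, Real.sqrt_zero, mul_zero,
      Complex.ofReal_zero, zero_smul, zero_add, smul_add, smul_smul, hB]
    simp
  · simp only [if_neg h0, smul_add, smul_smul, hA, hB, sb, sa, den]
    push_cast
    module

lemma addIdx_inj {γ β : Fin n → ℕ} {k : Fin n} (h : addIdx γ k = addIdx β k) : γ = β := by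
  funext i
  have hi := congrFun h i
  by_cases hik : i = k
  · subst hik; simp only [addIdx, Function.update_self] at hi; omega
  · simpa [addIdx, Function.update_of_ne hik] using hi

lemma subIdx_cases {γ β : Fin n → ℕ} {k : Fin n} (h : subIdx γ k = subIdx β k)
    (hne : γ ≠ β) : γ k = 0 ∨ β k = 0 := by
  have hk := congrFun h k
  simp only [subIdx, Function.update_self] at hk
  by_contra hc
  push_neg at hc
  apply hne
  funext i
  by_cases hik : i = k
  · subst hik; omega
  · have := congrFun h i
    simpa [subIdx, Function.update_of_ne hik] using this

lemma inner_Cfst (he : IsHilbertBasisFam e) (Pk Qk : Fin n → OpR n)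
    (hPk : IsMomentumHalf e Pk) (hQk : IsPositionHalf e Qk) (hn : 1 ≤ n) (k : Fin n)
    (γ β : Fin n → ℕ) :
    (inner ℂ ((Cop Pk Qk k).1 (e γ)) ((Cop Pk Qk k).1 (e β)) : ℂ)
      = if γ = β then ((4 * (((β k : ℝ) + 1) / den n β) : ℝ) : ℂ) else 0 := by
  rw [Cop_fst Pk Qk hPk hQk, Cop_fst Pk Qk hPk hQk, inner_smul_left, inner_smul_right,
    inner_e he, Complex.conj_ofReal]
  by_cases hgb : γ = β
  · subst hgb
    simp only [if_pos rfl, if_true, mul_one]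
    rw [← Complex.ofReal_mul]
    congr 1
    have := sb_sq hn γ k
    nlinarith [this]
  · rw [if_neg hgb, if_neg (fun hc => hgb (addIdx_inj hc)), mul_zero, mul_zero]

lemma inner_Csnd (he : IsHilbertBasisFam e) (Pk Qk : Fin n → OpR n)
    (hPk : IsMomentumHalf e Pk) (hQk : IsPositionHalf e Qk) (hn : 1 ≤ n) (k : Fin n)
    (γ β : Fin n → ℕ) :
    (inner ℂ ((Cop Pk Qk k).2 (e γ)) ((Cop Pk Qk k).2 (e β)) : ℂ)
      = if γ = β then ((4 * ((β k : ℝ) / den n β) : ℝ) : ℂ) else 0 := by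
  rw [Cop_snd Pk Qk hPk hQk, Cop_snd Pk Qk hPk hQk, inner_smul_left, inner_smul_right,
    inner_e he, Complex.conj_ofReal]
  by_cases hgb : γ = β
  · subst hgb
    simp only [if_pos rfl, if_true, mul_one]
    rw [← Complex.ofReal_mul]
    congr 1
    have := sa_sq hn γ k
    nlinarith [this]
  · rw [if_neg hgb]
    by_cases hsub : subIdx γ k = subIdx β k
    · rcases subIdx_cases hsub hgb with h0 | h0 <;>
        simp [sa, h0, Real.sqrt_zero]
    · rw [if_neg hsub, mul_zero, mul_zero]

/-- The main diagonal element `D = (1/4) ∑ₖ Cₖ* Cₖ`. -/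
def Dop (Pk Qk : Fin n → OpR n) : OpR n × OpR n :=
  (4 : ℂ)⁻¹ • ∑ k : Fin n, star (Cop Pk Qk k) * Cop Pk Qk k

def lam1 (n : ℕ) (β : Fin n → ℕ) : ℝ := ((degIdx β : ℝ) + n) / den n β
def lam2 (n : ℕ) (β : Fin n → ℕ) : ℝ := (degIdx β : ℝ) / den n β

lemma sum_deg (β : Fin n → ℕ) : ∑ k : Fin n, ((β k : ℝ) + 1) = (degIdx β : ℝ) + n := by
  rw [Finset.sum_add_distrib]
  simp [degIdx, Finset.card_univ]

lemma Dop_fst (hn : 1 ≤ n) (he : IsHilbertBasisFam e) (Pk Qk : Fin n → OpR n)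
    (hPk : IsMomentumHalf e Pk) (hQk : IsPositionHalf e Qk) (β : Fin n → ℕ) :
    (Dop Pk Qk).1 (e β) = ((lam1 n β : ℝ) : ℂ) • e β := by
  refine vec_ext_e he fun γ => ?_
  have hfst : (Dop Pk Qk).1 (e β)
      = (4 : ℂ)⁻¹ • ∑ k : Fin n,
        (ContinuousLinearMap.adjoint (Cop Pk Qk k).1) ((Cop Pk Qk k).1 (e β)) := by
    simp [Dop, Prod.fst_sum, Prod.fst_mul, Prod.fst_star,
      ContinuousLinearMap.star_eq_adjoint, ContinuousLinearMap.sum_apply,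
      ContinuousLinearMap.mul_apply]
  rw [hfst, inner_smul_right, inner_sum]
  simp_rw [ContinuousLinearMap.adjoint_inner_right]
  simp_rw [inner_Cfst he Pk Qk hPk hQk hn]
  rw [inner_smul_right, inner_e he]
  by_cases hgb : γ = β
  · subst hgb
    simp only [if_pos rfl, if_true, mul_one]
    have hsum : ∑ k : Fin n, ((4 * (((γ k : ℝ) + 1) / den n γ) : ℝ) : ℂ)
        = ((4 * (((degIdx γ : ℝ) + n) / den n γ) : ℝ) : ℂ) := by
      rw [← Complex.ofReal_sum]
      congr 1
      rw [← Finset.mul_sum, ← Finset.sum_div, sum_deg]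
    rw [hsum]
    have h4 : ((4:ℝ) : ℂ)⁻¹ = (4:ℂ)⁻¹ := by norm_num
    rw [← h4, ← Complex.ofReal_inv, ← Complex.ofReal_mul]
    congr 1
    rw [lam1]
    ring
  · simp [hgb]

lemma Dop_snd (hn : 1 ≤ n) (he : IsHilbertBasisFam e) (Pk Qk : Fin n → OpR n)
    (hPk : IsMomentumHalf e Pk) (hQk : IsPositionHalf e Qk) (β : Fin n → ℕ) :
    (Dop Pk Qk).2 (e β) = ((lam2 n β : ℝ) : ℂ) • e β := by
  refine vec_ext_e he fun γ => ?_
  have hsnd : (Dop Pk Qk).2 (e β)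
      = (4 : ℂ)⁻¹ • ∑ k : Fin n,
        (ContinuousLinearMap.adjoint (Cop Pk Qk k).2) ((Cop Pk Qk k).2 (e β)) := by
    simp [Dop, Prod.snd_sum, Prod.snd_mul, Prod.snd_star,
      ContinuousLinearMap.star_eq_adjoint, ContinuousLinearMap.sum_apply,
      ContinuousLinearMap.mul_apply]
  rw [hsnd, inner_smul_right, inner_sum]
  simp_rw [ContinuousLinearMap.adjoint_inner_right]
  simp_rw [inner_Csnd he Pk Qk hPk hQk hn]
  rw [inner_smul_right, inner_e he]
  by_cases hgb : γ = β
  · subst hgb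
    simp only [if_pos rfl, if_true, mul_one]
    have hsum : ∑ k : Fin n, ((4 * ((γ k : ℝ) / den n γ) : ℝ) : ℂ)
        = ((4 * ((degIdx γ : ℝ) / den n γ) : ℝ) : ℂ) := by
      rw [← Complex.ofReal_sum]
      congr 1
      rw [← Finset.mul_sum, ← Finset.sum_div]
      congr 2
      rw [degIdx]
      push_cast
      rfl
    rw [hsum]
    have h4 : ((4:ℝ) : ℂ)⁻¹ = (4:ℂ)⁻¹ := by norm_num
    rw [← h4, ← Complex.ofReal_inv, ← Complex.ofReal_mul]
    congr 1
    rw [lam2]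
    ring
  · simp [hgb]

lemma Dop_mem (Pk Qk : Fin n → OpR n) :
    Dop Pk Qk ∈ NonUnitalStarAlgebra.adjoin ℂ
      ((Set.range fun k : Fin n => ((Pk k, Pk k) : OpR n × OpR n)) ∪
        (Set.range fun k : Fin n => ((-Qk k, Qk k) : OpR n × OpR n))) := by
  refine SMulMemClass.smul_mem _ (sum_mem fun k _ => mul_mem (star_mem ?_) ?_) <;>
  · refine add_mem (NonUnitalStarAlgebra.subset_adjoin ℂ _ (Or.inr ⟨k, rfl⟩))
      (SMulMemClass.smul_mem _ (NonUnitalStarAlgebra.subset_adjoin ℂ _ (Or.inl ⟨k, rfl⟩)))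

/-- Rank one projection pair. -/
def P0 (e : (Fin n → ℕ) → L2R n) : OpR n × OpR n := (rankOne (e 0) (e 0), 0)

lemma degIdx_zero : degIdx (0 : Fin n → ℕ) = 0 := by simp [degIdx]

lemma lam1_zero (hn : 1 ≤ n) : lam1 n (0 : Fin n → ℕ) = 1/2 := by
  have hn' : (0:ℝ) < n := by exact_mod_cast hn
  simp only [lam1, den, degIdx_zero, Nat.cast_zero]
  field_simp
  ring

lemma degIdx_pos {β : Fin n → ℕ} (hβ : β ≠ 0) : 1 ≤ degIdx β := by
  by_contra h
  push_neg at h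
  apply hβ
  funext i
  have : degIdx β = 0 := by omega
  have := (Finset.sum_eq_zero_iff).mp this i (Finset.mem_univ i)
  simpa using this

lemma P0_idem (he : IsHilbertBasisFam e) : P0 e * P0 e = P0 e := by
  refine Prod.ext ?_ ?_
  · show (P0 e).1 * (P0 e).1 = (P0 e).1
    refine ContinuousLinearMap.ext fun u => ?_
    simp only [ContinuousLinearMap.mul_apply, P0, rankOne_apply, inner_smul_right,
      inner_e he, if_pos rfl]
    simp
  · show (0 : OpR n) * 0 = (0 : OpR n)
    simp

lemma star_P0 : star (P0 e) = P0 e := by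
  refine Prod.ext ?_ ?_
  · rw [Prod.fst_star]
    show star (rankOne (e 0) (e 0)) = rankOne (e 0) (e 0)
    rw [ContinuousLinearMap.star_eq_adjoint, adjoint_rankOne]
  · rw [Prod.snd_star]
    exact star_zero _

variable {Pk Qk : Fin n → OpR n}

lemma DP0 (hn : 1 ≤ n) (he : IsHilbertBasisFam e) (hPk : IsMomentumHalf e Pk)
    (hQk : IsPositionHalf e Qk) : ((2:ℂ) • Dop Pk Qk) * P0 e = P0 e := by
  refine Prod.ext ?_ ?_
  · show ((2:ℂ) • Dop Pk Qk).1 * (P0 e).1 = (P0 e).1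
    refine ContinuousLinearMap.ext fun u => ?_
    rw [ContinuousLinearMap.mul_apply]
    show ((2:ℂ) • Dop Pk Qk).1 (rankOne (e 0) (e 0) u) = rankOne (e 0) (e 0) u
    rw [Prod.smul_fst, rankOne_apply, ContinuousLinearMap.smul_apply,
      ContinuousLinearMap.map_smul, Dop_fst hn he Pk Qk hPk hQk, lam1_zero hn]
    rw [smul_smul, smul_smul]
    congr 1
    push_cast
    ring
  · show ((2:ℂ) • Dop Pk Qk).2 * (0 : OpR n) = (0 : OpR n)
    simp

lemma star_Dop : star (Dop Pk Qk) = Dop Pk Qk := by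
  rw [Dop, star_smul, star_sum]
  congr 1
  · simp [star_inv₀]
  · exact Finset.sum_congr rfl fun k _ => by rw [star_mul, star_star]

/-- The remainder `R = 2D - P0`. -/
def Rop (e : (Fin n → ℕ) → L2R n) (Pk Qk : Fin n → OpR n) : OpR n × OpR n :=
  (2:ℂ) • Dop Pk Qk - P0 e

lemma RopP0 (hn : 1 ≤ n) (he : IsHilbertBasisFam e) (hPk : IsMomentumHalf e Pk)
    (hQk : IsPositionHalf e Qk) : Rop e Pk Qk * P0 e = 0 := by
  rw [Rop, sub_mul, DP0 hn he hPk hQk, P0_idem he, sub_self]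

lemma star_Rop : star (Rop e Pk Qk) = Rop e Pk Qk := by
  rw [Rop, star_sub, star_smul, star_Dop, star_P0]
  congr 1
  congr 1
  simp

lemma P0Rop (hn : 1 ≤ n) (he : IsHilbertBasisFam e) (hPk : IsMomentumHalf e Pk)
    (hQk : IsPositionHalf e Qk) : P0 e * Rop e Pk Qk = 0 := by
  have h := congrArg star (RopP0 hn he hPk hQk)
  rw [star_mul, star_Rop, star_P0, star_zero] at h
  exact h

lemma pow_decomp (hn : 1 ≤ n) (he : IsHilbertBasisFam e) (hPk : IsMomentumHalf e Pk)
    (hQk : IsPositionHalf e Qk) (m : ℕ) :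
    ((2:ℂ) • Dop Pk Qk) ^ (m + 1) = P0 e + Rop e Pk Qk ^ (m + 1) := by
  induction m with
  | zero => simp [Rop]
  | succ m ih =>
    rw [pow_succ, ih]
    have h2 : (2:ℂ) • Dop Pk Qk = P0 e + Rop e Pk Qk := by rw [Rop]; abel
    rw [h2, add_mul, mul_add, mul_add, P0_idem he, P0Rop hn he hPk hQk,
      pow_succ (Rop e Pk Qk) m, mul_assoc (Rop e Pk Qk ^ m), mul_assoc (Rop e Pk Qk ^ m),
      RopP0 hn he hPk hQk, mul_zero, add_zero, zero_add]
    rw [← mul_assoc, ← pow_succ, ← pow_succ]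

def qq (n : ℕ) : ℝ := ((n:ℝ) + 1) / ((n:ℝ) + 2)

lemma qq_nonneg : 0 ≤ qq n := by unfold qq; positivity
lemma qq_lt_one : qq n < 1 := by
  unfold qq
  rw [div_lt_one (by positivity)]
  linarith

lemma Rop_fst_diag (hn : 1 ≤ n) (he : IsHilbertBasisFam e) {Pk Qk : Fin n → OpR n}
    (hPk : IsMomentumHalf e Pk) (hQk : IsPositionHalf e Qk) (β : Fin n → ℕ) :
    (Rop e Pk Qk).1 (e β)
      = (if β = 0 then 0 else ((2 * lam1 n β : ℝ) : ℂ)) • e β := by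
  have h1 : (Rop e Pk Qk).1 = (2:ℂ) • (Dop Pk Qk).1 - rankOne (e 0) (e 0) := rfl
  rw [h1, ContinuousLinearMap.sub_apply, ContinuousLinearMap.smul_apply,
    Dop_fst hn he Pk Qk hPk hQk, rankOne_apply, inner_e he]
  by_cases hb : β = 0
  · subst hb
    rw [if_pos rfl, if_pos rfl, lam1_zero hn, smul_smul]
    push_cast
    norm_num
  · rw [if_neg hb, if_neg (fun hc => hb hc.symm), smul_smul, zero_smul, sub_zero]
    push_cast
    ring_nf

lemma Rop_snd_diag (hn : 1 ≤ n) (he : IsHilbertBasisFam e) {Pk Qk : Fin n → OpR n}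
    (hPk : IsMomentumHalf e Pk) (hQk : IsPositionHalf e Qk) (β : Fin n → ℕ) :
    (Rop e Pk Qk).2 (e β) = ((2 * lam2 n β : ℝ) : ℂ) • e β := by
  have h1 : (Rop e Pk Qk).2 = (2:ℂ) • (Dop Pk Qk).2 - 0 := rfl
  rw [h1, ContinuousLinearMap.sub_apply, ContinuousLinearMap.smul_apply,
    Dop_snd hn he Pk Qk hPk hQk, smul_smul]
  simp only [ContinuousLinearMap.zero_apply, sub_zero]
  push_cast
  ring_nf

lemma lam1_bound (hn : 1 ≤ n) {β : Fin n → ℕ} (hβ : β ≠ 0) : 2 * lam1 n β ≤ qq n := by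
  have hd : (1:ℝ) ≤ (degIdx β : ℝ) := by exact_mod_cast degIdx_pos hβ
  have hN : (1:ℝ) ≤ (n:ℝ) := by exact_mod_cast hn
  rw [lam1, qq, den, ← mul_div_assoc, div_le_div_iff₀ (by nlinarith) (by nlinarith)]
  nlinarith

lemma lam2_bound (hn : 1 ≤ n) (β : Fin n → ℕ) : 2 * lam2 n β ≤ qq n := by
  have hd : (0:ℝ) ≤ (degIdx β : ℝ) := Nat.cast_nonneg _
  have hN : (1:ℝ) ≤ (n:ℝ) := by exact_mod_cast hn
  rw [lam2, qq, den, ← mul_div_assoc, div_le_div_iff₀ (by nlinarith) (by nlinarith)]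
  nlinarith

lemma lam1_nonneg (hn : 1 ≤ n) (β : Fin n → ℕ) : 0 ≤ lam1 n β := by
  have := den_pos hn β
  rw [lam1]
  positivity

lemma lam2_nonneg (hn : 1 ≤ n) (β : Fin n → ℕ) : 0 ≤ lam2 n β := by
  have := den_pos hn β
  rw [lam2]
  positivity

lemma Rop_norm (hn : 1 ≤ n) (he : IsHilbertBasisFam e) {Pk Qk : Fin n → OpR n}
    (hPk : IsMomentumHalf e Pk) (hQk : IsPositionHalf e Qk) :
    ‖Rop e Pk Qk‖ ≤ qq n := by
  rw [Prod.norm_def]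
  refine max_le ?_ ?_
  · refine diag_norm_le he _ _ (Rop_fst_diag hn he hPk hQk) qq_nonneg fun β => ?_
    by_cases hb : β = 0
    · simp [hb, qq_nonneg]
    · rw [if_neg hb]
      simp only [Complex.norm_real, Real.norm_eq_abs]
      exact abs_le.mpr ⟨by nlinarith [lam1_nonneg hn β, qq_nonneg (n := n)], lam1_bound hn hb⟩
  · refine diag_norm_le he _ _ (Rop_snd_diag hn he hPk hQk) qq_nonneg fun β => ?_
    simp only [Complex.norm_real, Real.norm_eq_abs]
    exact abs_le.mpr ⟨by nlinarith [lam2_nonneg hn β, qq_nonneg (n := n)], lam2_bound hn β⟩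

set_option synthInstance.maxHeartbeats 1000000 in
set_option maxHeartbeats 1000000 in
lemma P0_mem_closure (hn : 1 ≤ n) (he : IsHilbertBasisFam e) {Pk Qk : Fin n → OpR n}
    (hPk : IsMomentumHalf e Pk) (hQk : IsPositionHalf e Qk) :
    P0 e ∈ closure (NonUnitalStarAlgebra.adjoin ℂ
      ((Set.range fun k : Fin n => ((Pk k, Pk k) : OpR n × OpR n)) ∪
        (Set.range fun k : Fin n => ((-Qk k, Qk k) : OpR n × OpR n)))
      : Set (OpR n × OpR n)) := by
  set A := NonUnitalStarAlgebra.adjoin ℂ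
      ((Set.range fun k : Fin n => ((Pk k, Pk k) : OpR n × OpR n)) ∪
        (Set.range fun k : Fin n => ((-Qk k, Qk k) : OpR n × OpR n))) with hA
  have hDmem : Dop Pk Qk ∈ A := Dop_mem Pk Qk
  have hmem : ∀ m : ℕ, ((2:ℂ) • Dop Pk Qk) ^ (m + 1) ∈ A := by
    intro m
    induction m with
    | zero => rw [pow_one]; exact SMulMemClass.smul_mem _ hDmem
    | succ m ih =>
      rw [pow_succ]
      exact mul_mem ih (SMulMemClass.smul_mem _ hDmem)
  have hlim : Tendsto (fun m : ℕ => ((2:ℂ) • Dop Pk Qk) ^ (m + 1)) atTop (𝓝 (P0 e)) := by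
    have hdecomp : (fun m : ℕ => ((2:ℂ) • Dop Pk Qk) ^ (m + 1))
        = fun m : ℕ => P0 e + Rop e Pk Qk ^ (m + 1) :=
      funext fun m => pow_decomp hn he hPk hQk m
    rw [hdecomp]
    have hz : Tendsto (fun m : ℕ => Rop e Pk Qk ^ (m + 1)) atTop (𝓝 0) := by
      refine squeeze_zero_norm (fun m : ℕ => (norm_pow_le' _ (Nat.succ_pos m)).trans (pow_le_pow_left₀ (norm_nonneg _) (Rop_norm hn he hPk hQk) (m+1))) ?_
      exact (tendsto_pow_atTop_nhds_zero_of_lt_one qq_nonneg qq_lt_one).comp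
        (tendsto_add_atTop_nat 1)
    have := tendsto_const_nhds (x := P0 e) (f := atTop (α := ℕ)) |>.add hz
    simpa using this
  exact mem_closure_of_tendsto (s := (A : Set (OpR n × OpR n))) hlim (Eventually.of_forall hmem)

lemma exists_list_count (α : Fin n → ℕ) : ∃ l : List (Fin n), ∀ i, l.count i = α i := by
  classical
  refine ⟨(List.finRange n).flatMap fun k => List.replicate (α k) k, fun i => ?_⟩
  have hgen : ∀ L : List (Fin n),
      (L.flatMap fun k => List.replicate (α k) k).count i
        = (L.map fun k => if k = i then α k else 0).sum := by
    intro L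
    induction L with
    | nil => simp
    | cons a t ih =>
      rw [List.flatMap_cons, List.count_append, ih, List.map_cons, List.sum_cons]
      congr 1
      rw [List.count_replicate]
      simp
  rw [hgen]
  have := (Fin.sum_univ_def fun k => if k = i then α k else 0).symm
  rw [this, Finset.sum_ite_eq' Finset.univ i α]
  simp

lemma word_fst (hn : 1 ≤ n) {Pk Qk : Fin n → OpR n}
    (hPk : IsMomentumHalf e Pk) (hQk : IsPositionHalf e Qk) (l : List (Fin n)) (β : Fin n → ℕ) :
    ∃ c : ℂ, c ≠ 0 ∧ ((l.map (Cop Pk Qk)).prod).1 (e β)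
      = c • e (fun i => l.count i + β i) := by
  induction l with
  | nil =>
    refine ⟨1, one_ne_zero, ?_⟩
    simp only [List.map_nil, List.prod_nil, List.count_nil, zero_add, one_smul, Prod.fst_one,
      ContinuousLinearMap.one_apply]
  | cons k t ih =>
    obtain ⟨c, hc, hct⟩ := ih
    set γ := fun i => t.count i + β i with hγ
    refine ⟨((-2 * sb γ k : ℝ) : ℂ) * c, ?_, ?_⟩
    · refine mul_ne_zero ?_ hc
      rw [Complex.ofReal_ne_zero]
      nlinarith [sb_pos hn γ k]
    · have harg : addIdx γ k = fun i => List.count i (k :: t) + β i := by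
        funext i
        by_cases hik : i = k
        · subst hik
          simp only [addIdx, Function.update_self, hγ, List.count_cons, beq_self_eq_true,
            if_true, if_pos rfl]
          omega
        · simp only [addIdx, Function.update_of_ne hik, hγ, List.count_cons, beq_iff_eq,
            if_neg (Ne.symm hik), add_zero]
      rw [List.map_cons, List.prod_cons, Prod.fst_mul, ContinuousLinearMap.mul_apply, hct,
        ContinuousLinearMap.map_smul, Cop_fst Pk Qk hPk hQk, smul_smul, mul_comm c, harg]

section closureStuff
variable {A : NonUnitalStarSubalgebra ℂ (OpR n × OpR n)}

lemma mul_mem_closure_left {a x : OpR n × OpR n} (ha : a ∈ A)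
    (hx : x ∈ closure (A : Set (OpR n × OpR n))) :
    a * x ∈ closure (A : Set (OpR n × OpR n)) :=
  map_mem_closure (continuous_mul_left a) hx fun _ hy => mul_mem ha hy

lemma mul_mem_closure_right {a x : OpR n × OpR n} (ha : a ∈ A)
    (hx : x ∈ closure (A : Set (OpR n × OpR n))) :
    x * a ∈ closure (A : Set (OpR n × OpR n)) :=
  map_mem_closure (f := fun b => b * a) (continuous_mul_right a) hx fun _ hy => mul_mem hy ha

lemma smul_mem_closure (c : ℂ) {x : OpR n × OpR n}
    (hx : x ∈ closure (A : Set (OpR n × OpR n))) :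
    c • x ∈ closure (A : Set (OpR n × OpR n)) :=
  map_mem_closure (continuous_const_smul c) hx fun _ hy => SMulMemClass.smul_mem c hy

lemma add_mem_closure' {x y : OpR n × OpR n}
    (hx : x ∈ closure (A : Set (OpR n × OpR n)))
    (hy : y ∈ closure (A : Set (OpR n × OpR n))) :
    x + y ∈ closure (A : Set (OpR n × OpR n)) :=
  map_mem_closure₂ continuous_add hx hy fun _ ha _ hb => add_mem ha hb

lemma word_mul_closure_left {Pk Qk : Fin n → OpR n} (hgen : ∀ k, Cop Pk Qk k ∈ A)
    (l : List (Fin n)) {x : OpR n × OpR n} (hx : x ∈ closure (A : Set (OpR n × OpR n))) :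
    ((l.map (Cop Pk Qk)).prod) * x ∈ closure (A : Set (OpR n × OpR n)) := by
  induction l with
  | nil => rw [List.map_nil, List.prod_nil, one_mul]; exact hx
  | cons k t ih =>
    rw [List.map_cons, List.prod_cons, mul_assoc]
    exact mul_mem_closure_left (hgen k) ih

lemma word_mul_closure_right {Pk Qk : Fin n → OpR n} (hgen : ∀ k, Cop Pk Qk k ∈ A)
    (l : List (Fin n)) {x : OpR n × OpR n} (hx : x ∈ closure (A : Set (OpR n × OpR n))) :
    x * star ((l.map (Cop Pk Qk)).prod) ∈ closure (A : Set (OpR n × OpR n)) := by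
  induction l generalizing x with
  | nil => rw [List.map_nil, List.prod_nil, star_one, mul_one]; exact hx
  | cons k t ih =>
    rw [List.map_cons, List.prod_cons, star_mul, ← mul_assoc]
    exact mul_mem_closure_right (star_mem (hgen k)) (ih hx)
end closureStuff

lemma Cop_mem {Pk Qk : Fin n → OpR n} (k : Fin n) :
    Cop Pk Qk k ∈ NonUnitalStarAlgebra.adjoin ℂ
      ((Set.range fun k : Fin n => ((Pk k, Pk k) : OpR n × OpR n)) ∪
        (Set.range fun k : Fin n => ((-Qk k, Qk k) : OpR n × OpR n))) :=
  add_mem (NonUnitalStarAlgebra.subset_adjoin ℂ _ (Or.inr ⟨k, rfl⟩))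
    (SMulMemClass.smul_mem _ (NonUnitalStarAlgebra.subset_adjoin ℂ _ (Or.inl ⟨k, rfl⟩)))

lemma swap_mem {Pk Qk : Fin n → OpR n} {x : OpR n × OpR n}
    (hx : x ∈ NonUnitalStarAlgebra.adjoin ℂ
      ((Set.range fun k : Fin n => ((Pk k, Pk k) : OpR n × OpR n)) ∪
        (Set.range fun k : Fin n => ((-Qk k, Qk k) : OpR n × OpR n)))) :
    x.swap ∈ NonUnitalStarAlgebra.adjoin ℂ
      ((Set.range fun k : Fin n => ((Pk k, Pk k) : OpR n × OpR n)) ∪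
        (Set.range fun k : Fin n => ((-Qk k, Qk k) : OpR n × OpR n))) := by
  induction hx using NonUnitalStarAlgebra.adjoin_induction with
  | mem x hx =>
    rcases hx with ⟨k, rfl⟩ | ⟨k, rfl⟩
    · exact NonUnitalStarAlgebra.subset_adjoin ℂ _ (Or.inl ⟨k, rfl⟩)
    · have : (((-Qk k, Qk k) : OpR n × OpR n)).swap = (-1 : ℂ) • ((-Qk k, Qk k) : OpR n × OpR n) := by
        simp [Prod.swap, Prod.ext_iff]
      rw [this]
      exact SMulMemClass.smul_mem _ (NonUnitalStarAlgebra.subset_adjoin ℂ _ (Or.inr ⟨k, rfl⟩))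
  | add x y _ _ hx hy => rw [Prod.swap_add]; exact add_mem hx hy
  | zero => simpa using zero_mem _
  | mul x y _ _ hx hy => rw [Prod.swap_mul]; exact mul_mem hx hy
  | smul c x _ hx =>
    rw [show (c • x).swap = c • x.swap from rfl]
    exact SMulMemClass.smul_mem _ hx
  | star x _ hx =>
    rw [show (star x).swap = star x.swap from rfl]
    exact star_mem hx


end Aux15

set_option maxHeartbeats 1000000 in
set_option synthInstance.maxHeartbeats 1000000 in
/-- **Lemma 5.2.** For all `ξ ∈ ℂ²` and all multi-indices `α, β ∈ ℤ₊ⁿ`, the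
operator `E_{α,β} ⊗ ξ` belongs to the C*-subalgebra of `B(L²(ℝⁿ)) ⊗̄ ℂ²` generated by the
`2n` elements `{p_k H^{-1/2} ⊗ 𝟏, q_k H^{-1/2} ⊗ z : 1 ≤ k ≤ n}`, where `𝟏 = (1,1)`,
`z = (-1,1)`. (Here `B(L²(ℝⁿ)) ⊗̄ ℂ²` is modelled as pairs of operators, `e` is the Hermite
basis — any orthonormal basis of `L²(ℝⁿ)` indexed by `ℤ₊ⁿ` satisfying the harmonic-oscillator
matrix relations — and `E_{α,β} u = ⟪h_β, u⟫ h_α`.) -/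
theorem statement15 (n : ℕ) (hn : 1 ≤ n)
    (e : (Fin n → ℕ) → L2R n) (he : IsHilbertBasisFam e)
    (Pk Qk : Fin n → OpR n) (hPk : IsMomentumHalf e Pk) (hQk : IsPositionHalf e Qk)
    (ξ : ℂ × ℂ) (α β : Fin n → ℕ) :
    (ξ.1 • rankOne (e α) (e β), ξ.2 • rankOne (e α) (e β)) ∈
      closure (NonUnitalStarAlgebra.adjoin ℂ
        ((Set.range fun k : Fin n => ((Pk k, Pk k) : OpR n × OpR n)) ∪
          (Set.range fun k : Fin n => ((-Qk k, Qk k) : OpR n × OpR n)))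
        : Set (OpR n × OpR n)) := by
  classical
  open Aux15 in
  set A := NonUnitalStarAlgebra.adjoin ℂ
      ((Set.range fun k : Fin n => ((Pk k, Pk k) : OpR n × OpR n)) ∪
        (Set.range fun k : Fin n => ((-Qk k, Qk k) : OpR n × OpR n))) with hA
  obtain ⟨la, hla⟩ := Aux15.exists_list_count α
  obtain ⟨lb, hlb⟩ := Aux15.exists_list_count β
  obtain ⟨ca, hca0, hca⟩ := Aux15.word_fst hn hPk hQk la 0
  obtain ⟨cb, hcb0, hcb⟩ := Aux15.word_fst hn hPk hQk lb 0
  set Wa := (la.map (Aux15.Cop Pk Qk)).prod with hWadef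
  set Wb := (lb.map (Aux15.Cop Pk Qk)).prod with hWbdef
  have hWa : Wa.1 (e 0) = ca • e α := by
    have harg : (fun i => List.count i la + (0 : Fin n → ℕ) i) = α :=
      funext fun i => by simp [hla i]
    rw [hca, harg]
  have hWb : Wb.1 (e 0) = cb • e β := by
    have harg : (fun i => List.count i lb + (0 : Fin n → ℕ) i) = β :=
      funext fun i => by simp [hlb i]
    rw [hcb, harg]
  set c := ca * (starRingEnd ℂ) cb with hcdef
  have hc0 : c ≠ 0 := mul_ne_zero hca0 ((map_ne_zero _).mpr hcb0)
  have hE1 : Wa * (Aux15.P0 e * star Wb) = (c • rankOne (e α) (e β), 0) := by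
    refine Prod.ext ?_ ?_
    · show Wa.1 * ((Aux15.P0 e).1 * (star Wb).1) = c • rankOne (e α) (e β)
      refine ContinuousLinearMap.ext fun u => ?_
      rw [ContinuousLinearMap.mul_apply, ContinuousLinearMap.mul_apply]
      have hsW : (star Wb).1 = ContinuousLinearMap.adjoint Wb.1 := by
        rw [Prod.fst_star, ContinuousLinearMap.star_eq_adjoint]
      rw [hsW]
      show Wa.1 (rankOne (e 0) (e 0) (ContinuousLinearMap.adjoint Wb.1 u)) = _
      rw [Aux15.rankOne_apply, ContinuousLinearMap.adjoint_inner_right, hWb,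
        inner_smul_left, ContinuousLinearMap.map_smul, hWa,
        ContinuousLinearMap.smul_apply, Aux15.rankOne_apply, smul_smul, smul_smul]
      congr 1
      rw [hcdef]
      ring
    · show Wa.2 * ((0 : OpR n) * (star Wb).2) = 0
      rw [zero_mul, mul_zero]
  have hmemE1 : Wa * (Aux15.P0 e * star Wb) ∈ closure (A : Set (OpR n × OpR n)) :=
    Aux15.word_mul_closure_left (fun k => Aux15.Cop_mem k) la
      (Aux15.word_mul_closure_right (fun k => Aux15.Cop_mem k) lb
        (Aux15.P0_mem_closure hn he hPk hQk))
  rw [hE1] at hmemE1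
  have hT0 : ((rankOne (e α) (e β) : OpR n), (0 : OpR n))
      ∈ closure (A : Set (OpR n × OpR n)) := by
    have h1 := Aux15.smul_mem_closure c⁻¹ hmemE1
    have heq : c⁻¹ • ((c • rankOne (e α) (e β), (0 : OpR n)) : OpR n × OpR n)
        = (rankOne (e α) (e β), (0 : OpR n)) := by
      rw [Prod.smul_mk, inv_smul_smul₀ hc0, smul_zero]
    rwa [heq] at h1
  have h0T : ((0 : OpR n), (rankOne (e α) (e β) : OpR n))
      ∈ closure (A : Set (OpR n × OpR n)) := by
    have hswap := map_mem_closure continuous_swap hT0 fun x hx => Aux15.swap_mem hx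
    simpa using hswap
  have final : ((ξ.1 • rankOne (e α) (e β), ξ.2 • rankOne (e α) (e β)) : OpR n × OpR n)
      = ξ.1 • ((rankOne (e α) (e β) : OpR n), (0 : OpR n))
        + ξ.2 • (((0 : OpR n), rankOne (e α) (e β)) : OpR n × OpR n) := by
    refine Prod.ext ?_ ?_ <;> simp
  rw [final]
  exact Aux15.add_mem_closure' (Aux15.smul_mem_closure _ hT0) (Aux15.smul_mem_closure _ h0T)


end HeisenbergPaper
end
end
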